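/- arXiv:1808.10793 — 7 statements merged into one kernel-verified Lean document; each statement's English description precedes it below -/
import Mathlib

section
/- Let n be a natural number and let A be an invertible n × n integer matrix with A·A = 1 (an element of order at most 2 in GL_n(ℤ)). Then there exist natural numbers n₀, n₁, n₂ with n₀ + n₁ + 2·n₂ = n and an invertible integer matrix P ∈ GL_n(ℤ) such that P·A·P⁻¹ equals the block diagonal matrix diag(I_{n₀}, −I_{n₁}, J, …, J) consisting of an n₀ × n₀ identity block, an n₁ × n₁ block −I, and n₂ copies of the 2 × 2 block J = [[0,1],[1,0]]. -/
/-- The block diagonal `n × n` integer matrix `D(n₀,n₁,n₂) = diag(I_{n₀}, −I_{n₁}, J, …, J)`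
(with `n₂` copies of `J = [[0,1],[1,0]]`), meant for `n₀ + n₁ + 2·n₂ = n`. -/
def blockD (n n₀ n₁ n₂ : ℕ) : Matrix (Fin n) (Fin n) ℤ :=
  Matrix.of fun i j =>
    if (i : ℕ) < n₀ then (if (j : ℕ) = (i : ℕ) then 1 else 0)
    else if (i : ℕ) < n₀ + n₁ then (if (j : ℕ) = (i : ℕ) then -1 else 0)
    else if ((i : ℕ) - (n₀ + n₁)) % 2 = 0 then (if (j : ℕ) = (i : ℕ) + 1 then 1 else 0)
    else (if (j : ℕ) = (i : ℕ) - 1 then 1 else 0)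

/-!
Let `φ` be an involution of a lattice `M ≅ ℤⁿ`. Either `(1 - φ) M ⊆ 2 M`, and then
`M = ker (φ - 1) ⊕ ker (φ + 1)` (write `x = (x - z) + z` where `x - φ x = 2 z`), or there are
`y ∈ M` and a functional `f` with `f y = 1`, `f (φ y) = 0`. In the second case
`π x = f x • y + f (φ x) • φ y` is a `φ`-equivariant projection onto `span {y, φ y}`, on which `φ`
acts by `J`, and its kernel is a `φ`-stable complement of smaller rank, so we conclude by induction.

The dichotomy comes from a basis adapted to the saturated sublattice `ker (φ + 1)`: if some
`(1 - φ) bⱼ` has an odd coordinate, that coordinate sits on a `-1`-eigenvector `bᵢ`, and a suitable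
`y = bⱼ - t • bᵢ` together with a combination of the coordinate functionals at `i` and `j` works.
-/

open Matrix Module

theorem blockD_eq_fromBlocks_one_neg_one (n₀ n₁ : ℕ) :
    blockD (n₀ + n₁) n₀ n₁ 0 =
      reindex finSumFinEquiv finSumFinEquiv (fromBlocks 1 0 0 (-1)) := by
  ext i j
  induction i using Fin.addCases <;> induction j using Fin.addCases <;>
    simp [blockD, one_apply, Fin.ext_iff] <;> omega

theorem blockD_add_two_eq_fromBlocks {n n₀ n₁ n₂ : ℕ} (hn : n₀ + n₁ + 2 * n₂ = n) :
    blockD (n + 2) n₀ n₁ (n₂ + 1) =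
      reindex finSumFinEquiv finSumFinEquiv
        (fromBlocks (blockD n n₀ n₁ n₂) 0 0 !![0, 1; 1, 0]) := by
  ext i j
  induction i using Fin.addCases with
  | left i =>
    induction j using Fin.addCases with
    | left j => simp [blockD]
    | right j => simp [blockD]; omega
  | right i =>
    induction j using Fin.addCases with
    | left j => simp [blockD]; split_ifs <;> omega
    | right j => fin_cases i <;> fin_cases j <;> simp [blockD] <;> omega

theorem LinearMap.exists_basis_toMatrix_eq_fromBlocks_of_isCompl {R M : Type*} [CommRing R]
    [AddCommGroup M] [Module R M] {p q : Submodule R M} (hpq : IsCompl p q)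
    (φ : Module.End R M) (hp : ∀ x ∈ p, φ x ∈ p) (hq : ∀ x ∈ q, φ x ∈ q) {k l : ℕ}
    (bp : Basis (Fin k) R p) (bq : Basis (Fin l) R q) :
    ∃ b : Basis (Fin (k + l)) R M, toMatrix b b φ = reindex finSumFinEquiv finSumFinEquiv
      (fromBlocks (toMatrix bp bp (φ.restrict hp)) 0 0 (toMatrix bq bq (φ.restrict hq))) := by
  refine ⟨((bp.prod bq).map (p.prodEquivOfIsCompl q hpq)).reindex finSumFinEquiv, ?_⟩
  ext i j
  induction i using Fin.addCases <;> induction j using Fin.addCases <;>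
    simp [toMatrix_apply, Submodule.projectionOnto_apply_of_mem_left,
      Submodule.projectionOnto_apply_of_mem_right, hp, hq, restrict_apply]

theorem Submodule.exists_basis_adapted_of_saturated {R M ι : Type*} [CommRing R] [IsDomain R]
    [IsPrincipalIdealRing R] [AddCommGroup M] [Module R M] [Finite ι] (b : Basis ι R M)
    (N : Submodule R M) (hN : ∀ (a : R) (x : M), a ≠ 0 → a • x ∈ N → x ∈ N) :
    ∃ (b' : Basis ι R M) (S : Set ι),
      (∀ i ∈ S, b' i ∈ N) ∧ ∀ x ∈ N, ∀ i ∉ S, b'.repr x i = 0 := by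
  obtain ⟨_, snf⟩ := N.smithNormalForm b
  refine ⟨snf.bM, Set.range snf.f, ?_,
    fun x hx _ hi ↦ snf.repr_eq_zero_of_notMem_range ⟨x, hx⟩ hi⟩
  rintro _ ⟨i, rfl⟩
  refine hN (snf.a i) _ (fun ha ↦ snf.bN.ne_zero i (Subtype.ext ?_)) ?_
  · simp [snf.snf, ha]
  · exact snf.snf i ▸ (snf.bN i).2

theorem Module.Basis.exists_eq_two_smul_of_even_repr {M ι : Type*} [AddCommGroup M]
    [Fintype ι] (b : Basis ι ℤ M) {x : M} (hx : ∀ i, Even (b.repr x i)) :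
    ∃ z, x = 2 • z := by
  refine ⟨∑ i, (b.repr x i / 2) • b i, ?_⟩
  rw [two_nsmul, ← two_zsmul]
  conv_lhs => rw [← b.sum_repr x]
  rw [Finset.smul_sum]
  refine Finset.sum_congr rfl fun i _ ↦ ?_
  rw [smul_smul, Int.mul_ediv_cancel' (even_iff_two_dvd.mp (hx i))]

theorem forall_sub_eq_two_smul_or_exists_dual_pair {M ι : Type*} [AddCommGroup M] [Fintype ι]
    (b : Basis ι ℤ M) {φ : Module.End ℤ M} (hφ : Function.Involutive φ) :
    (∀ x, ∃ z, x - φ x = 2 • z) ∨ ∃ (y : M) (f : M →ₗ[ℤ] ℤ), f y = 1 ∧ f (φ y) = 0 := by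
  have := b.isTorsionFree
  obtain ⟨b, S, hSK, hK⟩ := (LinearMap.ker (φ + 1)).exists_basis_adapted_of_saturated b
    fun a x ha hx ↦ by
      rw [LinearMap.mem_ker, map_smul, smul_eq_zero] at hx
      exact hx.resolve_left ha
  have hSneg : ∀ i ∈ S, φ (b i) = -b i := fun i hi ↦ eq_neg_of_add_eq_zero_left (hSK i hi)
  have hdK : ∀ x, x - φ x ∈ LinearMap.ker (φ + 1) := fun x ↦ by simp [hφ x]
  by_cases heven : ∀ j i, Even (b.repr (b j - φ (b j)) i)
  · left
    have hspan : Submodule.span ℤ (Set.range b) ≤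
        (LinearMap.range (2 • LinearMap.id : Module.End ℤ M)).comap (1 - φ) := by
      rw [Submodule.span_le]
      rintro _ ⟨j, rfl⟩
      obtain ⟨z, hz⟩ := b.exists_eq_two_smul_of_even_repr (heven j)
      exact ⟨z, by simp [hz]⟩
    intro x
    obtain ⟨z, hz⟩ := hspan (b.span_eq ▸ Submodule.mem_top (x := x))
    exact ⟨z, by simpa [eq_comm] using hz⟩
  · right
    push Not at heven
    obtain ⟨j, i, hodd⟩ := heven
    set d := b j - φ (b j) with hd
    have hj : j ∉ S := fun hj ↦ hodd <| by
      rw [hd, hSneg j hj, sub_neg_eq_add, map_add, Finsupp.add_apply]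
      exact ⟨_, rfl⟩
    have hi : i ∈ S := by
      by_contra hi
      exact hodd (by rw [hK d (hdK _) i hi]; exact Even.zero)
    have hij : i ≠ j := fun h ↦ hj (h ▸ hi)
    have hdj : b.repr d j = 0 := hK d (hdK _) j hj
    obtain ⟨t, ht⟩ := Int.not_even_iff_odd.mp hodd
    have hφy : φ (b j - t • b i) = b j - d + t • b i := by
      rw [map_sub, map_smul, hSneg i hi, hd, sub_sub_cancel, smul_neg, sub_neg_eq_add]
    -- the coordinates of `y` and `φ y` at `(j, i)` are `(1, -t)` and `(1, -(t + 1))`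
    refine ⟨b j - t • b i, (1 + t) • b.coord j + b.coord i, ?_, ?_⟩
    · simp [hij, hij.symm]
    · rw [hφy]
      simp [hij, hij.symm, hdj, ht]
      ring

theorem isCompl_ker_sub_one_ker_add_one {R M : Type*} [Ring R] [AddCommGroup M] [Module R M]
    [IsAddTorsionFree M] {φ : Module.End R M} (hφ : Function.Involutive φ)
    (h2 : ∀ x, ∃ z, x - φ x = 2 • z) :
    IsCompl (LinearMap.ker (φ - 1)) (LinearMap.ker (φ + 1)) := by
  constructor
  · rw [Submodule.disjoint_def]
    intro x h₁ h₂
    simp only [LinearMap.mem_ker, LinearMap.sub_apply, LinearMap.add_apply,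
      Module.End.one_apply] at h₁ h₂
    have : 2 • x = 0 := by rw [two_nsmul]; linear_combination (norm := module) h₂ - h₁
    simpa using this
  · rw [codisjoint_iff, eq_top_iff]
    intro x _
    obtain ⟨z, hz⟩ := h2 x
    have hz' : φ z + z = 0 := by
      have : 2 • (φ z + z) = 0 := by
        rw [smul_add, ← map_nsmul, ← hz, map_sub, hφ x]
        abel
      rwa [smul_eq_zero, or_iff_right two_ne_zero] at this
    refine Submodule.mem_sup.mpr ⟨x - z, ?_, z, ?_, sub_add_cancel x z⟩
    · simp only [LinearMap.mem_ker, LinearMap.sub_apply, Module.End.one_apply, map_sub]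
      linear_combination (norm := module) -hz - hz'
    · simpa using hz'

theorem exists_basis_toMatrix_eq_blockD_of_forall_sub_eq_two_smul {M ι : Type*}
    [AddCommGroup M] [Finite ι] (b : Basis ι ℤ M) {φ : Module.End ℤ M}
    (hφ : Function.Involutive φ) (h2 : ∀ x, ∃ z, x - φ x = 2 • z) :
    ∃ n₀ n₁ : ℕ, ∃ c : Basis (Fin (n₀ + n₁)) ℤ M,
      LinearMap.toMatrix c c φ = blockD (n₀ + n₁) n₀ n₁ 0 := by
  have := b.isTorsionFree
  have := IsAddTorsionFree.of_isTorsionFree (R := ℤ) (M := M)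
  have hfix (x : LinearMap.ker (φ - 1)) : φ x = x := sub_eq_zero.mp (LinearMap.mem_ker.mp x.2)
  have hneg (x : LinearMap.ker (φ + 1)) : φ x = -x :=
    add_eq_zero_iff_eq_neg.mp (LinearMap.mem_ker.mp x.2)
  have hp : ∀ x ∈ LinearMap.ker (φ - 1), φ x ∈ LinearMap.ker (φ - 1) :=
    fun x hx ↦ (hfix ⟨x, hx⟩).symm ▸ hx
  have hq : ∀ x ∈ LinearMap.ker (φ + 1), φ x ∈ LinearMap.ker (φ + 1) :=
    fun x hx ↦ (hneg ⟨x, hx⟩).symm ▸ neg_mem hx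
  have hp1 : φ.restrict hp = LinearMap.id := LinearMap.ext fun x ↦ Subtype.ext (hfix x)
  have hq1 : φ.restrict hq = -LinearMap.id := LinearMap.ext fun x ↦ Subtype.ext (hneg x)
  obtain ⟨n₀, bp⟩ := (LinearMap.ker (φ - 1)).basisOfPid b
  obtain ⟨n₁, bq⟩ := (LinearMap.ker (φ + 1)).basisOfPid b
  obtain ⟨c, hc⟩ := LinearMap.exists_basis_toMatrix_eq_fromBlocks_of_isCompl
    (isCompl_ker_sub_one_ker_add_one hφ h2) φ hp hq bp bq
  refine ⟨n₀, n₁, c, ?_⟩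
  rw [hc, hp1, hq1, map_neg, LinearMap.toMatrix_id, LinearMap.toMatrix_id,
    blockD_eq_fromBlocks_one_neg_one]

theorem exists_isCompl_basis_toMatrix_eq_swap_of_dual_pair {R M : Type*} [CommRing R]
    [AddCommGroup M] [Module R M] {φ : Module.End R M} (hφ : Function.Involutive φ) {y : M}
    {f : M →ₗ[R] R} (hy : f y = 1) (hφy : f (φ y) = 0) :
    ∃ (p q : Submodule R M) (_ : IsCompl p q) (hp : ∀ x ∈ p, φ x ∈ p) (_ : ∀ x ∈ q, φ x ∈ q)
      (bp : Basis (Fin 2) R p), LinearMap.toMatrix bp bp (φ.restrict hp) = !![0, 1; 1, 0] := by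
  set π : Module.End R M := f.smulRight y + (f ∘ₗ φ).smulRight (φ y)
  have hπ (x : M) : π x = f x • y + f (φ x) • φ y := rfl
  have hπφ (x : M) : π (φ x) = φ (π x) := by simp [hπ, hφ x, hφ y, add_comm]
  have hπy : π y = y := by simp [hπ, hy, hφy]
  have hπφy : π (φ y) = φ y := by simp [hπ, hy, hφy, hφ y]
  have hidem : IsIdempotentElem π := LinearMap.ext fun x ↦ by
    rw [Module.End.mul_apply, hπ x, map_add, map_smul, map_smul, hπy, hπφy]
  have hli : LinearIndependent R ![y, φ y] := by
    refine LinearIndependent.pair_iff.mpr fun s t hst ↦ ⟨?_, ?_⟩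
    · simpa [hy, hφy] using congr(f $hst)
    · simpa [hy, hφy, hφ y] using congr(f (φ $hst))
  have hrange : LinearMap.range π = Submodule.span R (Set.range ![y, φ y]) := by
    apply le_antisymm
    · rintro _ ⟨x, rfl⟩
      rw [hπ]
      exact add_mem (Submodule.smul_mem _ _ (Submodule.subset_span ⟨0, rfl⟩))
        (Submodule.smul_mem _ _ (Submodule.subset_span ⟨1, rfl⟩))
    · rw [Submodule.span_le]
      rintro _ ⟨i, rfl⟩
      fin_cases i
      exacts [⟨y, hπy⟩, ⟨φ y, hπφy⟩]
  have hp : ∀ x ∈ LinearMap.range π, φ x ∈ LinearMap.range π := by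
    rintro _ ⟨x, rfl⟩
    exact ⟨φ x, hπφ x⟩
  have hq : ∀ x ∈ LinearMap.ker π, φ x ∈ LinearMap.ker π := fun x hx ↦ by
    rw [LinearMap.mem_ker] at hx ⊢
    rw [hπφ, hx, map_zero]
  set bp := (Basis.span hli).map (LinearEquiv.ofEq _ _ hrange.symm)
  have hbp (i : Fin 2) : (bp i : M) = ![y, φ y] i := by simp [bp, Basis.span_apply]
  have h0 : φ.restrict hp (bp 0) = bp 1 := Subtype.ext <| by simp [hbp]
  have h1 : φ.restrict hp (bp 1) = bp 0 := Subtype.ext <| by simp [hbp, hφ y]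
  refine ⟨_, _, LinearMap.IsIdempotentElem.isCompl hidem, hp, hq, bp, ?_⟩
  ext i j
  fin_cases i <;> fin_cases j <;> simp [LinearMap.toMatrix_apply, h0, h1]

theorem Module.End.exists_basis_toMatrix_eq_blockD {M : Type*} [AddCommGroup M] {n : ℕ}
    (b : Basis (Fin n) ℤ M) {φ : Module.End ℤ M} (hφ : Function.Involutive φ) :
    ∃ n₀ n₁ n₂ : ℕ, n₀ + n₁ + 2 * n₂ = n ∧
      ∃ c : Basis (Fin n) ℤ M, LinearMap.toMatrix c c φ = blockD n n₀ n₁ n₂ := by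
  induction n using Nat.strong_induction_on generalizing M with
  | _ n ih =>
  rcases forall_sub_eq_two_smul_or_exists_dual_pair b hφ with h2 | ⟨y, f, hy, hφy⟩
  · obtain ⟨n₀, n₁, c, hc⟩ := exists_basis_toMatrix_eq_blockD_of_forall_sub_eq_two_smul b hφ h2
    obtain rfl : n₀ + n₁ = n := by simpa using Fintype.card_congr (c.indexEquiv b)
    exact ⟨n₀, n₁, 0, rfl, c, hc⟩
  · obtain ⟨p, q, hpq, hp, hq, bp, hbp⟩ :=
      exists_isCompl_basis_toMatrix_eq_swap_of_dual_pair hφ hy hφy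
    obtain ⟨k, bq⟩ := q.basisOfPid b
    obtain rfl : k + 2 = n := by
      simpa using Fintype.card_congr
        (((bq.prod bp).map (q.prodEquivOfIsCompl p hpq.symm)).indexEquiv b)
    obtain ⟨n₀, n₁, n₂, hk, c', hc'⟩ :=
      ih k (by omega) bq (φ := φ.restrict hq) fun x ↦ Subtype.ext (hφ x)
    obtain ⟨c, hc⟩ :=
      LinearMap.exists_basis_toMatrix_eq_fromBlocks_of_isCompl hpq.symm φ hq hp c' bp
    exact ⟨n₀, n₁, n₂ + 1, by omega, c, by rw [hc, hc', hbp, blockD_add_two_eq_fromBlocks hk]⟩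

theorem involution_conjugate_to_blockD_general (n : ℕ) (A : Matrix (Fin n) (Fin n) ℤ)
    (h2 : A * A = 1) :
    ∃ n₀ n₁ n₂ : ℕ, n₀ + n₁ + 2 * n₂ = n ∧
      ∃ P : GL (Fin n) ℤ,
        (P : Matrix (Fin n) (Fin n) ℤ) * A * ((P⁻¹ : GL (Fin n) ℤ) : Matrix (Fin n) (Fin n) ℤ) =
          blockD n n₀ n₁ n₂ := by
  have hA : Function.Involutive (toLin' A) := fun x ↦ by simp [mulVec_mulVec, h2]
  set e := Pi.basisFun ℤ (Fin n)
  obtain ⟨n₀, n₁, n₂, hn, c, hc⟩ := Module.End.exists_basis_toMatrix_eq_blockD e hA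
  refine ⟨n₀, n₁, n₂, hn, ⟨c.toMatrix e, e.toMatrix c, c.toMatrix_mul_toMatrix_flip e,
    e.toMatrix_mul_toMatrix_flip c⟩, ?_⟩
  change c.toMatrix e * A * e.toMatrix c = _
  rw [← hc, ← basis_toMatrix_mul_linearMap_toMatrix_mul_basis_toMatrix c e c e,
    LinearMap.toMatrix_eq_toMatrix', LinearMap.toMatrix'_toLin']

/-- **Classification of involutions in `GL_n(ℤ)` (existence of the normal form),
Lemma 1.5.** Every invertible integer matrix `A` with `A·A = 1` is conjugate in
`GL_n(ℤ)` to a block diagonal matrix `diag(I_{n₀}, −I_{n₁}, J, …, J)` with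
`n₀ + n₁ + 2·n₂ = n`. -/
theorem involution_conjugate_to_blockD (n : ℕ) (A : Matrix (Fin n) (Fin n) ℤ)
    (hA : IsUnit A) (h2 : A * A = 1) :
    ∃ n₀ n₁ n₂ : ℕ, n₀ + n₁ + 2 * n₂ = n ∧
      ∃ P : GL (Fin n) ℤ,
        (P : Matrix (Fin n) (Fin n) ℤ) * A * ((P⁻¹ : GL (Fin n) ℤ) : Matrix (Fin n) (Fin n) ℤ) =
          blockD n n₀ n₁ n₂ :=
  involution_conjugate_to_blockD_general n A h2
end

section
/- Let n, n₀, n₁, n₂, m₀, m₁, m₂ be natural numbers with n₀ + n₁ + 2·n₂ = n = m₀ + m₁ + 2·m₂. If the block diagonal matrices D(n₀,n₁,n₂) = diag(I_{n₀}, −I_{n₁}, J, …, J) (n₂ copies of J) and D(m₀,m₁,m₂) = diag(I_{m₀}, −I_{m₁}, J, …, J) (m₂ copies of J) are conjugate in GL_n(ℤ), i.e. P·D(n₀,n₁,n₂)·P⁻¹ = D(m₀,m₁,m₂) for some P ∈ GL_n(ℤ), then n₀ = m₀, n₁ = m₁ and n₂ = m₂. -/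
/-!
The trace of `D(n₀,n₁,n₂)` is `n₀ - n₁`. Reduced modulo 2, the signs disappear and each
`J`-block of `D - 1` becomes the all-ones `2 × 2` matrix, so `D - 1` has rank `n₂` over `𝔽₂`.
Both numbers are invariant under conjugation in `GL_n(ℤ)`, and together with
`n₀ + n₁ + 2n₂ = n` they determine `(n₀, n₁, n₂)`.
-/

open Matrix

theorem Matrix.rank_units_conj {m R : Type*} [Fintype m] [DecidableEq m] [CommRing R]
    (M : (Matrix m m R)ˣ) (N : Matrix m m R) :
    ((M : Matrix m m R) * N * (↑M⁻¹ : Matrix m m R)).rank = N.rank := by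
  rw [rank_mul_eq_left_of_isUnit_det _ _ (isUnit_det_of_right_inverse M⁻¹.mul_inv),
    rank_mul_eq_right_of_isUnit_det _ _ (isUnit_det_of_right_inverse M.mul_inv)]

theorem Matrix.GeneralLinearGroup.map_conj_sub_one {m R S : Type*} [Fintype m]
    [DecidableEq m] [CommRing R] [CommRing S] (f : R →+* S) (P : GL m R) (A : Matrix m m R) :
    ((P : Matrix m m R) * A * (↑P⁻¹ : Matrix m m R)).map f - 1 =
      (map f P : Matrix m m S) * (A.map f - 1) * (↑(map f P)⁻¹ : Matrix m m S) := by
  rw [← map_inv, mul_sub, sub_mul, mul_one, ← Units.val_mul, ← map_mul, mul_inv_cancel, map_one,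
    Units.val_one, Matrix.map_mul, Matrix.map_mul]
  rfl

/-- Column `l` is the indicator of the rows `c + 2l` and `c + 2l + 1`. -/
def pairBlocks (R : Type*) [Zero R] [One R] (n k c : ℕ) : Matrix (Fin n) (Fin k) R :=
  of fun i l => if c ≤ (i : ℕ) ∧ ((i : ℕ) - c) / 2 = l then 1 else 0

theorem pairBlocks_mul_transpose (R : Type*) [NonAssocSemiring R] {n k c : ℕ}
    (h : c + 2 * k = n) :
    pairBlocks R n k c * (pairBlocks R n k c)ᵀ =
      of fun (i j : Fin n) =>
        if c ≤ (i : ℕ) ∧ c ≤ (j : ℕ) ∧ ((i : ℕ) - c) / 2 = ((j : ℕ) - c) / 2 then 1 else 0 := by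
  ext i j
  have hi := i.isLt
  simp only [mul_apply, pairBlocks, transpose_apply, of_apply, ite_zero_mul_ite_zero, mul_one]
  by_cases hci : c ≤ (i : ℕ)
  · rw [Finset.sum_eq_single ⟨((i : ℕ) - c) / 2, by omega⟩
      (fun l _ hl => if_neg fun hl' => hl (Fin.ext (by simp only; omega))) (by simp)]
    simp only [hci, true_and]
    exact if_congr (by omega) rfl rfl
  · simp [hci]

theorem blockD_apply_self (n n₀ n₁ n₂ : ℕ) (i : Fin n) :
    blockD n n₀ n₁ n₂ i i =
      2 * (if (i : ℕ) < n₀ then 1 else 0) - (if (i : ℕ) < n₀ + n₁ then 1 else 0) := by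
  simp only [blockD, of_apply]
  split_ifs <;> omega

theorem blockD_trace (n n₀ n₁ n₂ : ℕ) (h : n₀ + n₁ ≤ n) :
    (blockD n n₀ n₁ n₂).trace = n₀ - n₁ := by
  simp only [trace, diag, blockD_apply_self, Finset.sum_sub_distrib, ← Finset.mul_sum,
    Finset.sum_boole, Fin.card_filter_val_lt]
  omega

theorem blockD_map_zmod_two_sub_one_apply (n n₀ n₁ n₂ : ℕ) (i j : Fin n) :
    ((blockD n n₀ n₁ n₂).map (Int.castRingHom (ZMod 2)) - 1) i j =
      if n₀ + n₁ ≤ (i : ℕ) ∧ n₀ + n₁ ≤ (j : ℕ) ∧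
          ((i : ℕ) - (n₀ + n₁)) / 2 = ((j : ℕ) - (n₀ + n₁)) / 2 then 1 else 0 := by
  have hi := i.isLt
  have hj := j.isLt
  simp only [Matrix.sub_apply, map_apply, Int.coe_castRingHom, one_apply, blockD, of_apply,
    apply_ite (Int.cast : ℤ → ZMod 2), Int.cast_one, Int.cast_neg, Int.cast_zero, Fin.ext_iff]
  split_ifs <;> first | rfl | decide | omega

theorem blockD_map_zmod_two_sub_one_rank (n n₀ n₁ n₂ : ℕ) (hn : n₀ + n₁ + 2 * n₂ = n) :
    ((blockD n n₀ n₁ n₂).map (Int.castRingHom (ZMod 2)) - 1).rank = n₂ := by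
  have hfactor : (blockD n n₀ n₁ n₂).map (Int.castRingHom (ZMod 2)) - 1 =
      pairBlocks (ZMod 2) n n₂ (n₀ + n₁) * (pairBlocks (ZMod 2) n n₂ (n₀ + n₁))ᵀ := by
    rw [pairBlocks_mul_transpose _ hn]
    ext i j
    exact blockD_map_zmod_two_sub_one_apply n n₀ n₁ n₂ i j
  let firstRow (l : Fin n₂) : Fin n := ⟨n₀ + n₁ + 2 * l, by omega⟩
  have hminor : ((blockD n n₀ n₁ n₂).map (Int.castRingHom (ZMod 2)) - 1).submatrix
      firstRow firstRow = 1 := by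
    ext k l
    rw [submatrix_apply, blockD_map_zmod_two_sub_one_apply, one_apply]
    exact if_congr (by simp only [firstRow, Fin.ext_iff]; omega) rfl rfl
  apply le_antisymm
  · rw [hfactor]
    exact (rank_mul_le_left _ _).trans ((rank_le_card_width _).trans (by simp))
  · calc n₂ = (1 : Matrix (Fin n₂) (Fin n₂) (ZMod 2)).rank := by simp [rank_one]
      _ ≤ _ := hminor ▸ rank_submatrix_le _ _ _

/-- **Classification of involutions in `GL_n(ℤ)` (uniqueness of the normal form),
Lemma 1.5.** If `D(n₀,n₁,n₂)` and `D(m₀,m₁,m₂)` (with `n₀+n₁+2n₂ = n = m₀+m₁+2m₂`)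
are conjugate in `GL_n(ℤ)`, then `n₀ = m₀`, `n₁ = m₁` and `n₂ = m₂`. -/
theorem blockD_conjugate_unique (n n₀ n₁ n₂ m₀ m₁ m₂ : ℕ)
    (hn : n₀ + n₁ + 2 * n₂ = n) (hm : m₀ + m₁ + 2 * m₂ = n)
    (P : GL (Fin n) ℤ)
    (h : (P : Matrix (Fin n) (Fin n) ℤ) * blockD n n₀ n₁ n₂ *
          ((P⁻¹ : GL (Fin n) ℤ) : Matrix (Fin n) (Fin n) ℤ) = blockD n m₀ m₁ m₂) :
    n₀ = m₀ ∧ n₁ = m₁ ∧ n₂ = m₂ := by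
  have htrace : (n₀ : ℤ) - n₁ = m₀ - m₁ := by
    rw [← blockD_trace n n₀ n₁ n₂ (by omega), ← blockD_trace n m₀ m₁ m₂ (by omega), ← h,
      trace_units_conj]
  have hrank : n₂ = m₂ := by
    rw [← blockD_map_zmod_two_sub_one_rank n n₀ n₁ n₂ hn,
      ← blockD_map_zmod_two_sub_one_rank n m₀ m₁ m₂ hm, ← h,
      GeneralLinearGroup.map_conj_sub_one, rank_units_conj]
  omega
end

section
/- Let G be a group, H a subgroup of G, and σ : G → G a group automorphism with σ ∘ σ = id. Then there exists a σ-equivariant real structure on G/H if and only if there exists g ∈ G satisfying both: (1) σ(H) = g·H·g⁻¹ (compatibility condition), and (2) σ(g)·g ∈ H (involution condition). Moreover, for such a g, the map μ : G/H → G/H, kH ↦ σ(k)·g·H is well defined and is a σ-equivariant real structure on G/H. -/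
/-- A `σ`-equivariant real structure on the homogeneous space `G/H`: a map
`μ : G/H → G/H` with `μ ∘ μ = id` and `μ(g·x) = σ(g)·μ(x)`. -/
def IsEquivRealStructure {G : Type*} [Group G] (σ : G →* G) (H : Subgroup G)
    (μ : G ⧸ H → G ⧸ H) : Prop :=
  (∀ x, μ (μ x) = x) ∧ ∀ (g : G) (x : G ⧸ H), μ (g • x) = σ g • μ x

/-- **Lemma 2.3.** `G/H` admits a `σ`-equivariant real structure iff there exists
`g ∈ G` with `σ(H) = g·H·g⁻¹` (compatibility) and `σ(g)·g ∈ H` (involution condition);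
and for such a `g`, the map `kH ↦ σ(k)·g·H` is a well-defined `σ`-equivariant real
structure on `G/H`. -/
theorem exists_equivRealStructure_iff {G : Type*} [Group G] (H : Subgroup G)
    (σ : G →* G) (hσ : ∀ g, σ (σ g) = g) :
    ((∃ μ : G ⧸ H → G ⧸ H, IsEquivRealStructure σ H μ) ↔
      ∃ g : G, H.map σ = H.map (MulAut.conj g).toMonoidHom ∧ σ g * g ∈ H) ∧
    ∀ g : G, H.map σ = H.map (MulAut.conj g).toMonoidHom → σ g * g ∈ H →
      ∃ μ : G ⧸ H → G ⧸ H, IsEquivRealStructure σ H μ ∧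
        ∀ k : G, μ (k : G ⧸ H) = ((σ k * g : G) : G ⧸ H) := by
  have aux : ∀ g : G, H.map σ = H.map (MulAut.conj g).toMonoidHom → σ g * g ∈ H →
      ∃ μ : G ⧸ H → G ⧸ H, IsEquivRealStructure σ H μ ∧
        ∀ k : G, μ (k : G ⧸ H) = ((σ k * g : G) : G ⧸ H) := by
    intro g hc hi
    -- from hc: for h ∈ H, g⁻¹ * σ h * g ∈ H
    have key1 : ∀ h ∈ H, g⁻¹ * σ h * g ∈ H := by
      intro h hh
      have hmem : σ h ∈ H.map (MulAut.conj g).toMonoidHom := by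
        rw [← hc]; exact ⟨h, hh, rfl⟩
      obtain ⟨h', hh', he⟩ := hmem
      simp only [MulEquiv.coe_toMonoidHom, MulAut.conj_apply] at he
      have : g⁻¹ * σ h * g = h' := by rw [← he]; group
      rwa [this]
    refine ⟨fun x => Quotient.liftOn' x (fun k => ((σ k * g : G) : G ⧸ H))
      (fun a b hab => ?_), ⟨?_, ?_⟩, fun k => rfl⟩
    · have h1 : a⁻¹ * b ∈ H := QuotientGroup.leftRel_apply.mp hab
      apply Quotient.sound'
      rw [QuotientGroup.leftRel_apply]
      have := key1 _ h1
      have heq : (σ a * g)⁻¹ * (σ b * g) = g⁻¹ * σ (a⁻¹ * b) * g := by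
        simp only [map_mul, map_inv]; group
      rw [heq]; exact this
    · intro x
      induction x using QuotientGroup.induction_on with
      | H k =>
        show ((σ (σ k * g) * g : G) : G ⧸ H) = (k : G ⧸ H)
        rw [QuotientGroup.eq]
        have heq : (σ (σ k * g) * g)⁻¹ * k = (σ g * g)⁻¹ := by
          simp only [map_mul, hσ]; group
        rw [heq]; exact inv_mem hi
    · intro a x
      induction x using QuotientGroup.induction_on with
      | H k =>
        rw [MulAction.Quotient.smul_mk]
        show ((σ (a * k) * g : G) : G ⧸ H) = σ a • ((σ k * g : G) : G ⧸ H)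
        rw [MulAction.Quotient.smul_mk]
        exact congrArg _ (by simp [map_mul, mul_assoc])
  refine ⟨⟨?_, fun ⟨g, h1, h2⟩ => (aux g h1 h2).imp fun μ h => h.1⟩, aux⟩
  rintro ⟨μ, hinv, hequiv⟩
  obtain ⟨g, hg⟩ : ∃ g : G, (g : G ⧸ H) = μ (((1 : G) : G ⧸ H)) := by
    obtain ⟨g, hg⟩ := Quotient.exists_rep (μ (((1 : G) : G ⧸ H))); exact ⟨g, hg⟩
  have hμmk : ∀ k : G, μ ((k : G ⧸ H)) = ((σ k * g : G) : G ⧸ H) := by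
    intro k
    have h1 : ((k : G) : G ⧸ H) = k • (((1 : G) : G ⧸ H)) := by
      rw [MulAction.Quotient.smul_mk]; simp
    rw [h1, hequiv, ← hg, MulAction.Quotient.smul_mk]
    simp [smul_eq_mul]
  -- involution condition
  have hinvol : σ g * g ∈ H := by
    have h1 : μ (μ (((1 : G) : G ⧸ H))) = ((1 : G) : G ⧸ H) := hinv _
    rw [← hg, hμmk] at h1
    have h2 := QuotientGroup.eq.mp h1
    rw [mul_one] at h2
    exact inv_mem_iff.mp h2
  have key1 : ∀ h ∈ H, g⁻¹ * σ h * g ∈ H := by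
    intro h hh
    have h1 : ((h : G) : G ⧸ H) = ((1 : G) : G ⧸ H) := by
      rw [QuotientGroup.eq]; simpa using inv_mem hh
    have h2 := hμmk h
    rw [h1, hμmk, map_one, one_mul] at h2
    have := QuotientGroup.eq.mp h2
    have heq : g⁻¹ * (σ h * g) = g⁻¹ * σ h * g := by group
    rwa [heq] at this
  refine ⟨g, ?_, hinvol⟩
  ext x
  simp only [Subgroup.mem_map, MulEquiv.coe_toMonoidHom, MulAut.conj_apply]
  constructor
  · rintro ⟨h, hh, rfl⟩
    exact ⟨g⁻¹ * σ h * g, key1 h hh, by group⟩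
  · rintro ⟨h, hh, rfl⟩
    refine ⟨σ (g * h * g⁻¹), ?_, by simp only [map_mul, map_inv, hσ]⟩
    have : σ (g * h * g⁻¹) = (σ g * g) * (g⁻¹ * σ h * g) * (σ g * g)⁻¹ := by
      simp only [map_mul, map_inv]; group
    rw [this]
    exact mul_mem (mul_mem hinvol (key1 h hh)) (inv_mem hinvol)
end

section
/- Let G be a group, H a subgroup of G, and σ₁ : G → G a group automorphism with σ₁ ∘ σ₁ = id such that σ₁(H) = H. Let c ∈ G with c·σ₁(c) ∈ Z(G), and let σ₂ = inn_c ∘ σ₁ (so σ₂ is again an involutive automorphism). Then: (i) there exists a σ₁-equivariant real structure on G/H; and (ii) there exists a σ₂-equivariant real structure on G/H if and only if there exists n ∈ N_G(H) such that c·σ₁(c)·σ₁(n)·n ∈ H. -/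
namespace QuotientGroup

variable {G : Type*} [Group G] {H : Subgroup G} {σ : G →* G} {a : G}

def realStructureMk (σ : G →* G) (H : Subgroup G) (a : G)
    (ha : ∀ h ∈ H, a⁻¹ * σ h * a ∈ H) : G ⧸ H → G ⧸ H :=
  Quotient.map' (fun g => σ g * a) fun g₁ g₂ hg => by
    rw [leftRel_apply] at hg ⊢
    simpa [mul_assoc] using ha _ hg

@[simp]
theorem realStructureMk_mk (ha : ∀ h ∈ H, a⁻¹ * σ h * a ∈ H) (g : G) :
    realStructureMk σ H a ha g = ↑(σ g * a) :=
  rfl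

theorem isEquivRealStructure_realStructureMk (hσ : ∀ g, σ (σ g) = g)
    (ha : ∀ h ∈ H, a⁻¹ * σ h * a ∈ H) (hinv : σ a * a ∈ H) :
    IsEquivRealStructure σ H (realStructureMk σ H a ha) := by
  refine ⟨fun x => ?_, fun g x => ?_⟩
  · induction x using QuotientGroup.induction_on with
    | H g =>
      rw [realStructureMk_mk, realStructureMk_mk, eq_comm, QuotientGroup.eq, map_mul, hσ]
      simpa [mul_assoc] using hinv
  · induction x using QuotientGroup.induction_on with
    | H y => simp [mul_assoc]

end QuotientGroup

namespace IsEquivRealStructure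

variable {G : Type*} [Group G] {H : Subgroup G} {σ : G →* G} {μ : G ⧸ H → G ⧸ H} {a : G}

theorem apply_mk (hμ : IsEquivRealStructure σ H μ) (ha : μ (1 : G) = a) (g : G) :
    μ g = ↑(σ g * a) := by
  simpa [ha] using hμ.2 g (1 : G)

theorem conj_mem (hμ : IsEquivRealStructure σ H μ) (ha : μ (1 : G) = a) {h : G} (hh : h ∈ H) :
    a⁻¹ * σ h * a ∈ H := by
  have hh1 : ((h : G) : G ⧸ H) = (1 : G) := by simpa [QuotientGroup.eq] using hh
  have := hμ.apply_mk ha h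
  rw [hh1, ha, QuotientGroup.eq] at this
  simpa [mul_assoc] using this

theorem mul_mem (hμ : IsEquivRealStructure σ H μ) (ha : μ (1 : G) = a) : σ a * a ∈ H := by
  have := hμ.apply_mk ha a
  rw [← ha, hμ.1, QuotientGroup.eq] at this
  simpa using this

end IsEquivRealStructure

theorem exists_isEquivRealStructure_iff {G : Type*} [Group G] {H : Subgroup G} {σ : G →* G}
    (hσ : ∀ g, σ (σ g) = g) :
    (∃ μ, IsEquivRealStructure σ H μ) ↔
      ∃ a, (∀ h ∈ H, a⁻¹ * σ h * a ∈ H) ∧ σ a * a ∈ H := by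
  constructor
  · rintro ⟨μ, hμ⟩
    obtain ⟨a, ha⟩ := QuotientGroup.mk_surjective (μ (1 : G))
    exact ⟨a, fun h => hμ.conj_mem ha.symm, hμ.mul_mem ha.symm⟩
  · rintro ⟨a, hconj, hinv⟩
    exact ⟨_, QuotientGroup.isEquivRealStructure_realStructureMk hσ hconj hinv⟩

section InnerTwist

variable {G : Type*} [Group G] {σ : G →* G} {c : G}

def innerTwist (c : G) (σ : G →* G) : G →* G :=
  (MulAut.conj c).toMonoidHom.comp σ

@[simp]
theorem innerTwist_apply (g : G) : innerTwist c σ g = c * σ g * c⁻¹ :=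
  rfl

theorem innerTwist_involutive (hσ : ∀ g, σ (σ g) = g) (hc : c * σ c ∈ Subgroup.center G)
    (g : G) : innerTwist c σ (innerTwist c σ g) = g := by
  have hcomm := Subgroup.mem_center_iff.mp hc g
  calc innerTwist c σ (innerTwist c σ g) = c * σ c * g * (c * σ c)⁻¹ := by simp [hσ, mul_assoc]
    _ = g := by rw [← hcomm]; group

end InnerTwist

namespace Subgroup

variable {G : Type*} [Group G] {H : Subgroup G}

theorem mem_normalizer_of_conj_mem {n : G} (h₁ : ∀ h ∈ H, n * h * n⁻¹ ∈ H)
    (h₂ : ∀ h ∈ H, n⁻¹ * h * n ∈ H) : n ∈ normalizer (H : Set G) :=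
  mem_normalizer_iff.2 fun h =>
    ⟨h₁ h, fun hh => by simpa [mul_assoc] using h₂ _ hh⟩

theorem conj_mem_of_central_mul_mem {z m n : G} (hz : z ∈ center G) (hzmn : z * m * n ∈ H)
    (hm : ∀ h ∈ H, m⁻¹ * h * m ∈ H) {h : G} (hh : h ∈ H) : n * h * n⁻¹ ∈ H := by
  have hconj := hm _ (H.mul_mem (H.mul_mem hzmn hh) (inv_mem hzmn))
  have hcomm := mem_center_iff.mp hz (m * n * h * n⁻¹ * m⁻¹)
  have : n * h * n⁻¹ = m⁻¹ * (z * m * n * h * (z * m * n)⁻¹) * m :=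
    calc n * h * n⁻¹ = m⁻¹ * (m * n * h * n⁻¹ * m⁻¹ * z) * z⁻¹ * m := by group
      _ = m⁻¹ * (z * m * n * h * (z * m * n)⁻¹) * m := by rw [hcomm]; group
  exact this ▸ hconj

end Subgroup

theorem exists_mem_normalizer_of_innerTwist {G : Type*} [Group G] {H : Subgroup G}
    {σ : G →* G} {c a : G} (hσ : ∀ g, σ (σ g) = g) (hσH : H.map σ ≤ H)
    (hc : c * σ c ∈ Subgroup.center G) (hconj : ∀ h ∈ H, a⁻¹ * innerTwist c σ h * a ∈ H)
    (hinv : innerTwist c σ a * a ∈ H) :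
    ∃ n ∈ Subgroup.normalizer (H : Set G), c * σ c * σ n * n ∈ H := by
  have hσmem : ∀ h ∈ H, σ h ∈ H := fun h hh => hσH (H.mem_map_of_mem σ hh)
  set n := c⁻¹ * a
  have hconj' : ∀ h ∈ H, n⁻¹ * σ h * n ∈ H := fun h hh => by
    simpa [n, mul_assoc] using hconj h hh
  have hmem : c * σ c * σ n * n ∈ H := by simpa [n, mul_assoc] using hinv
  refine ⟨n, Subgroup.mem_normalizer_of_conj_mem (fun h hh => ?_) fun h hh => ?_, hmem⟩
  · refine Subgroup.conj_mem_of_central_mul_mem hc hmem (fun k hk => ?_) hh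
    simpa [hσ] using hσmem _ (hconj' k hk)
  · simpa [hσ] using hconj' _ (hσmem h hh)

/-- **Lemma 2.6.** Let `σ₁` be an involutive automorphism of `G` with `σ₁(H) = H`, and
let `σ₂ = inn_c ∘ σ₁` with `c·σ₁(c) ∈ Z(G)`. Then (i) `G/H` admits a `σ₁`-equivariant
real structure; and (ii) `G/H` admits a `σ₂`-equivariant real structure iff there is
`n ∈ N_G(H)` with `c·σ₁(c)·σ₁(n)·n ∈ H`. -/
theorem equivRealStructure_innerTwist {G : Type*} [Group G] (H : Subgroup G)
    (σ₁ : G →* G) (hσ : ∀ g, σ₁ (σ₁ g) = g) (hH : H.map σ₁ = H)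
    (c : G) (hc : c * σ₁ c ∈ Subgroup.center G) :
    (∃ μ : G ⧸ H → G ⧸ H, IsEquivRealStructure σ₁ H μ) ∧
    ((∃ μ : G ⧸ H → G ⧸ H,
        IsEquivRealStructure ((MulAut.conj c).toMonoidHom.comp σ₁) H μ) ↔
      ∃ n ∈ Subgroup.normalizer (H : Set G), c * σ₁ c * σ₁ n * n ∈ H) := by
  have hσmem : ∀ h ∈ H, σ₁ h ∈ H := fun h hh => hH.le (H.mem_map_of_mem σ₁ hh)
  refine ⟨(exists_isEquivRealStructure_iff hσ).2 ⟨1, by simpa using hσmem, by simp⟩, ?_⟩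
  change (∃ μ, IsEquivRealStructure (innerTwist c σ₁) H μ) ↔ _
  rw [exists_isEquivRealStructure_iff (innerTwist_involutive hσ hc)]
  constructor
  · rintro ⟨a, hconj, hinv⟩
    exact exists_mem_normalizer_of_innerTwist hσ hH.le hc hconj hinv
  · rintro ⟨n, hn, hmem⟩
    refine ⟨c * n, fun h hh => ?_, by simpa [mul_assoc] using hmem⟩
    simpa [mul_assoc] using Subgroup.mem_normalizer_iff''.1 hn _ |>.1 (hσmem h hh)
end

section
/- Let n₀, n₁, n₂ be natural numbers, let T = (Fin n₀ → ℂˣ) × (Fin n₁ → ℂˣ) × (Fin n₂ → ℂˣ × ℂˣ), regarded as a group acting on itself by multiplication, and let σ : T → T be the automorphism σ(x, y, z) = (i ↦ conj(xᵢ), j ↦ conj(yⱼ)⁻¹, k ↦ (conj(z_k.2), conj(z_k.1))). For each sign vector ε : Fin n₁ → {±1} define μ_ε : T → T by μ_ε(x, y, z) = (i ↦ conj(xᵢ), j ↦ ε(j)·conj(yⱼ)⁻¹, k ↦ (conj(z_k.2), conj(z_k.1))). Then each μ_ε is a σ-equivariant real structure on T; two maps μ_ε, μ_{ε'} are equivalent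 (conjugate by a translation of T) only if ε = ε'; and every σ-equivariant real structure on T is equivalent to μ_ε for some ε. In particular there are exactly 2^{n₁} equivalence classes of σ-equivariant real structures on T. -/
/-- The torus `(ℂˣ)^{n₀} × (ℂˣ)^{n₁} × (ℂˣ × ℂˣ)^{n₂}`. -/
abbrev TorusT (n₀ n₁ n₂ : ℕ) : Type :=
  (Fin n₀ → ℂˣ) × (Fin n₁ → ℂˣ) × (Fin n₂ → ℂˣ × ℂˣ)

/-- Complex conjugation on `ℂˣ`. -/
noncomputable def conjU : ℂˣ →* ℂˣ := Units.map (starRingEnd ℂ).toMonoidHom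

/-- The real group structure `σ₀^{×n₀} × σ₁^{×n₁} × σ₂^{×n₂}` on the torus:
`γ(x, y, z) = (i ↦ conj (xᵢ), j ↦ conj (yⱼ)⁻¹, k ↦ (conj (z_k).2, conj (z_k).1))`. -/
noncomputable def torusGamma (n₀ n₁ n₂ : ℕ) : TorusT n₀ n₁ n₂ →* TorusT n₀ n₁ n₂ where
  toFun t :=
    (fun i => conjU (t.1 i),
     fun j => (conjU (t.2.1 j))⁻¹,
     fun k => (conjU ((t.2.2 k).2), conjU ((t.2.2 k).1)))
  map_one' := by
    refine Prod.ext ?_ (Prod.ext ?_ ?_) <;> funext x <;> simp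
  map_mul' a b := by
    refine Prod.ext ?_ (Prod.ext ?_ ?_) <;> funext x <;>
      simp [mul_inv, Prod.ext_iff, mul_comm]

/-- A `σ`-equivariant real structure on a `G`-set `X`: a map `μ : X → X` with
`μ ∘ μ = id` and `μ(g·x) = σ(g)·μ(x)`. -/
def IsRealStructureOn {G X : Type*} [Group G] [MulAction G X] (σ : G →* G)
    (μ : X → X) : Prop :=
  (∀ x, μ (μ x) = x) ∧ ∀ (g : G) (x : X), μ (g • x) = σ g • μ x

/-- Equivalence of real structures on a `G`-set `X`: `μ ∼ μ'` iff `μ' = ψ ∘ μ ∘ ψ⁻¹`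
for some `G`-equivariant bijection `ψ` of `X`. -/
def equivRealStructures (G : Type*) {X : Type*} [Group G] [MulAction G X]
    (μ μ' : X → X) : Prop :=
  ∃ ψ : Equiv.Perm X, (∀ (g : G) (x : X), ψ (g • x) = g • ψ x) ∧
    ∀ x : X, μ' x = ψ (μ (ψ.symm x))

/-- For a sign vector `ε : Fin n₁ → {±1}`, the map
`μ_ε(x, y, z) = (i ↦ conj (xᵢ), j ↦ ε(j)·conj (yⱼ)⁻¹, k ↦ (conj (z_k).2, conj (z_k).1))`
on the torus. -/
noncomputable def muEps (n₀ n₁ n₂ : ℕ) (ε : Fin n₁ → ℤˣ) :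
    TorusT n₀ n₁ n₂ → TorusT n₀ n₁ n₂ := fun t =>
  (fun i => conjU (t.1 i),
   fun j => Units.map (Int.castRingHom ℂ).toMonoidHom (ε j) * (conjU (t.2.1 j))⁻¹,
   fun k => (conjU ((t.2.2 k).2), conjU ((t.2.2 k).1)))

/-!
Since `T` acts simply transitively on itself, an equivariant real structure is
`x ↦ σ x * c` for the cocycle `c = μ 1` (`σ c * c = 1`), and a `T`-equivariant bijection
is a right translation by some `d`, which replaces `c` by `σ(d)⁻¹ c d`. The classes thus
form `H¹(ℤ/2, T)`, computed factor by factor. For `σ₀` a cocycle is `exp L` with `L`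
imaginary and is split by `exp (-L/2)`; for `σ₂` every cocycle splits; for `σ₁` the cocycles
are the nonzero reals and `d` acts by multiplication by `|d|²`, so only the sign survives.
-/

open ComplexConjugate

section RealStructures

variable {G : Type*} [Group G] {σ : G →* G}

theorem IsRealStructureOn.apply_eq_map_mul_apply_one {μ : G → G}
    (h : IsRealStructureOn σ μ) (x : G) : μ x = σ x * μ 1 := by
  simpa using h.2 x 1

theorem IsRealStructureOn.map_apply_one_mul_apply_one {μ : G → G}
    (h : IsRealStructureOn σ μ) : σ (μ 1) * μ 1 = 1 := by
  rw [← h.apply_eq_map_mul_apply_one, h.1]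

theorem isRealStructureOn_map_mul (hσ : Function.Involutive σ) {c : G} (hc : σ c * c = 1) :
    IsRealStructureOn σ (fun x => σ x * c) :=
  ⟨fun x => by simp only [map_mul, mul_assoc, hc, mul_one, hσ x],
    fun g x => by simp [mul_assoc]⟩

theorem equivRealStructures_map_mul_iff (c c' : G) :
    equivRealStructures G (fun x => σ x * c) (fun x => σ x * c') ↔
      ∃ d, c' = (σ d)⁻¹ * c * d := by
  constructor
  · rintro ⟨ψ, hψ, h⟩
    have hψ_apply : ∀ x, ψ x = x * ψ 1 := fun x => by simpa using hψ x 1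
    have hψ_symm : ψ.symm 1 = (ψ 1)⁻¹ := by
      rw [ψ.symm_apply_eq, hψ_apply, inv_mul_cancel]
    refine ⟨ψ 1, ?_⟩
    simpa [hψ_symm, hψ_apply (_ * c), mul_assoc] using h 1
  · rintro ⟨d, rfl⟩
    refine ⟨Equiv.mulRight d, fun g x => mul_assoc g x d, fun x => ?_⟩
    simp [mul_assoc]

end RealStructures

theorem equivRealStructures_equivalence (G X : Type*) [Group G] [MulAction G X] :
    Equivalence (equivRealStructures G (X := X)) where
  refl _ := ⟨Equiv.refl _, fun _ _ => rfl, fun _ => rfl⟩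
  symm := by
    rintro μ μ' ⟨ψ, hψ, h⟩
    refine ⟨ψ.symm, fun g x => ?_, fun x => ?_⟩
    · rw [ψ.symm_apply_eq, hψ, ψ.apply_symm_apply]
    · simp [h (ψ x)]
  trans := by
    rintro μ μ' μ'' ⟨ψ, hψ, h⟩ ⟨ψ', hψ', h'⟩
    refine ⟨ψ.trans ψ', fun g x => ?_, fun x => ?_⟩
    · simp only [Equiv.trans_apply, hψ, hψ']
    · simp [h', h]

theorem card_quot_eq_of_representatives {α ι : Type*} {r : α → α → Prop} (hr : Equivalence r)
    (f : ι → α) (hf_inj : ∀ i j, r (f i) (f j) → i = j) (hf_surj : ∀ a, ∃ i, r a (f i)) :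
    Nat.card (Quot r) = Nat.card ι := by
  refine (Nat.card_eq_of_bijective (Quot.mk r ∘ f) ⟨fun i j h => ?_, fun q => ?_⟩).symm
  · exact hf_inj i j (hr.eqvGen_iff.mp (Quot.eq.mp h))
  · induction q using Quot.ind with
    | mk a =>
      obtain ⟨i, hi⟩ := hf_surj a
      exact ⟨i, Quot.sound (hr.symm hi)⟩

@[simp]
theorem coe_conjU (u : ℂˣ) : ((conjU u : ℂˣ) : ℂ) = conj (u : ℂ) := rfl

theorem conjU_involutive : Function.Involutive conjU := fun u => by ext; simp

theorem exists_inv_conjU_mul_mul_eq_one {c : ℂˣ} (hc : conjU c * c = 1) :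
    ∃ d : ℂˣ, (conjU d)⁻¹ * c * d = 1 := by
  have hnorm : ‖(c : ℂ)‖ = 1 := by
    have h := congrArg (fun u : ℂˣ => (u : ℂ)) hc
    simp only [Units.val_mul, coe_conjU, Units.val_one, ← Complex.normSq_eq_conj_mul_self] at h
    rw [Complex.norm_def, (by exact_mod_cast h : Complex.normSq c = 1), Real.sqrt_one]
  set L := Complex.log c
  have hL : conj L = -L := by
    apply Complex.ext <;> simp [L, Complex.log_re, hnorm]
  refine ⟨Units.mk0 (Complex.exp (-L / 2)) (Complex.exp_ne_zero _), ?_⟩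
  ext
  rw [Units.val_mul, Units.val_mul, Units.val_inv_eq_inv_val, coe_conjU, Units.val_mk0,
    ← Complex.exp_log (Units.ne_zero c), ← Complex.exp_conj, map_div₀, map_neg, hL, map_ofNat,
    ← Complex.exp_neg, ← Complex.exp_add, ← Complex.exp_add, Units.val_one]
  convert Complex.exp_zero using 2
  ring

theorem Real.exists_mul_mul_eq_intCast_unit {r : ℝ} (hr : r ≠ 0) :
    ∃ (e : ℤˣ) (s : ℝ), s ≠ 0 ∧ s * r * s = (e : ℤ) := by
  rcases hr.lt_or_gt with hneg | hpos
  · have hsq := Real.mul_self_sqrt (neg_nonneg.mpr hneg.le)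
    have hs : Real.sqrt (-r) ≠ 0 := (Real.sqrt_pos.mpr (neg_pos.mpr hneg)).ne'
    refine ⟨-1, (Real.sqrt (-r))⁻¹, inv_ne_zero hs, ?_⟩
    field_simp
    push_cast
    linarith
  · have hsq := Real.mul_self_sqrt hpos.le
    have hs : Real.sqrt r ≠ 0 := (Real.sqrt_pos.mpr hpos).ne'
    refine ⟨1, (Real.sqrt r)⁻¹, inv_ne_zero hs, ?_⟩
    field_simp
    push_cast
    linarith

theorem exists_conjU_mul_mul_eq_intCast {c : ℂˣ} (hc : (conjU c)⁻¹ * c = 1) :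
    ∃ (e : ℤˣ) (d : ℂˣ), conjU d * c * d = Units.map (Int.castRingHom ℂ).toMonoidHom e := by
  have hreal : ((c : ℂ).re : ℂ) = c := Complex.conj_eq_iff_re.mp (by
    simpa using congrArg (fun u : ℂˣ => (u : ℂ)) (inv_mul_eq_one.mp hc))
  have hre : (c : ℂ).re ≠ 0 := fun h => c.ne_zero (by rw [← hreal, h, Complex.ofReal_zero])
  obtain ⟨e, s, hs, hse⟩ := Real.exists_mul_mul_eq_intCast_unit hre
  refine ⟨e, Units.mk0 (s : ℂ) (Complex.ofReal_ne_zero.mpr hs), ?_⟩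
  ext
  rw [Units.val_mul, Units.val_mul, ← hreal]
  simpa using congrArg (fun x : ℝ => (x : ℂ)) hse

theorem eq_of_intCast_eq_conj_mul_mul {e e' : ℤˣ} {z : ℂ}
    (h : ((e' : ℤ) : ℂ) = conj z * (e : ℤ) * z) : e = e' := by
  have hnorm : ((e' : ℤ) : ℂ) = (Complex.normSq z : ℂ) * (e : ℤ) := by
    rw [h, Complex.normSq_eq_conj_mul_self]; ring
  have hnonneg := Complex.normSq_nonneg z
  rcases Int.units_eq_one_or e with rfl | rfl <;> rcases Int.units_eq_one_or e' with rfl | rfl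
  · rfl
  · have : ((-1 : ℝ) : ℂ) = Complex.normSq z := by simpa using hnorm
    linarith [Complex.ofReal_injective this]
  · have : ((1 : ℝ) : ℂ) = (-Complex.normSq z : ℝ) := by simpa using hnorm
    linarith [Complex.ofReal_injective this]
  · rfl

section Torus

variable {n₀ n₁ n₂ : ℕ}

theorem torusGamma_involutive : Function.Involutive (torusGamma n₀ n₁ n₂) := fun t => by
  refine Prod.ext ?_ (Prod.ext ?_ ?_) <;> funext i <;> simp [torusGamma, conjU_involutive _]

theorem muEps_eq_torusGamma_mul (ε : Fin n₁ → ℤˣ) :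
    muEps n₀ n₁ n₂ ε = fun x => torusGamma n₀ n₁ n₂ x * muEps n₀ n₁ n₂ ε 1 := by
  funext x
  refine Prod.ext ?_ (Prod.ext ?_ ?_) <;> funext i <;> simp [muEps, torusGamma, mul_comm]

theorem torusGamma_muEps_one_mul_muEps_one (ε : Fin n₁ → ℤˣ) :
    torusGamma n₀ n₁ n₂ (muEps n₀ n₁ n₂ ε 1) * muEps n₀ n₁ n₂ ε 1 = 1 := by
  refine Prod.ext ?_ (Prod.ext ?_ ?_) <;> funext i <;> ext <;> simp [muEps, torusGamma]

theorem isRealStructureOn_muEps (ε : Fin n₁ → ℤˣ) :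
    IsRealStructureOn (torusGamma n₀ n₁ n₂) (muEps n₀ n₁ n₂ ε) := by
  rw [muEps_eq_torusGamma_mul]
  exact isRealStructureOn_map_mul torusGamma_involutive (torusGamma_muEps_one_mul_muEps_one ε)

theorem torusGamma_mul_self_eq_one_iff (c : TorusT n₀ n₁ n₂) :
    torusGamma n₀ n₁ n₂ c * c = 1 ↔
      (∀ i, conjU (c.1 i) * c.1 i = 1) ∧ (∀ j, (conjU (c.2.1 j))⁻¹ * c.2.1 j = 1) ∧
        ∀ k, conjU (c.2.2 k).2 * (c.2.2 k).1 = 1 ∧ conjU (c.2.2 k).1 * (c.2.2 k).2 = 1 := by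
  simp only [torusGamma, MonoidHom.coe_mk, OneHom.coe_mk, Prod.ext_iff, funext_iff,
    forall_and, Prod.fst_mul, Prod.snd_mul, Pi.mul_apply, Prod.fst_one, Prod.snd_one,
    Pi.one_apply]

/-- On a factor `(ℂˣ × ℂˣ, σ₂)` the cocycle `(a, conj a⁻¹)` is split by `(1, conj a)`. -/
theorem exists_muEps_one_eq_inv_torusGamma_mul_mul {c : TorusT n₀ n₁ n₂}
    (hc : torusGamma n₀ n₁ n₂ c * c = 1) :
    ∃ ε d, muEps n₀ n₁ n₂ ε 1 = (torusGamma n₀ n₁ n₂ d)⁻¹ * c * d := by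
  obtain ⟨h₀, h₁, h₂⟩ := (torusGamma_mul_self_eq_one_iff c).mp hc
  choose d₀ hd₀ using fun i => exists_inv_conjU_mul_mul_eq_one (h₀ i)
  choose ε d₁ hd₁ using fun j => exists_conjU_mul_mul_eq_intCast (h₁ j)
  refine ⟨ε, (d₀, d₁, fun k => (1, conjU (c.2.2 k).1)), ?_⟩
  refine Prod.ext ?_ (Prod.ext ?_ ?_) <;> funext i
  · simp [muEps, torusGamma, hd₀]
  · simp [muEps, torusGamma, hd₁]
  · ext : 1 <;> simp [muEps, torusGamma, conjU_involutive _, mul_comm _ (conjU _), (h₂ i).2]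

theorem eq_of_muEps_one_eq_inv_torusGamma_mul_mul {ε ε' : Fin n₁ → ℤˣ} {d : TorusT n₀ n₁ n₂}
    (h : muEps n₀ n₁ n₂ ε' 1 = (torusGamma n₀ n₁ n₂ d)⁻¹ * muEps n₀ n₁ n₂ ε 1 * d) :
    ε = ε' := by
  funext j
  apply eq_of_intCast_eq_conj_mul_mul (z := d.2.1 j)
  simpa [muEps, torusGamma, mul_comm] using congrArg (fun t : TorusT n₀ n₁ n₂ => (t.2.1 j : ℂ)) h

theorem eq_of_equivRealStructures_muEps {ε ε' : Fin n₁ → ℤˣ}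
    (h : equivRealStructures (TorusT n₀ n₁ n₂) (muEps n₀ n₁ n₂ ε) (muEps n₀ n₁ n₂ ε')) :
    ε = ε' := by
  rw [muEps_eq_torusGamma_mul ε, muEps_eq_torusGamma_mul ε',
    equivRealStructures_map_mul_iff] at h
  obtain ⟨d, hd⟩ := h
  exact eq_of_muEps_one_eq_inv_torusGamma_mul_mul hd

theorem exists_equivRealStructures_muEps {μ : TorusT n₀ n₁ n₂ → TorusT n₀ n₁ n₂}
    (hμ : IsRealStructureOn (torusGamma n₀ n₁ n₂) μ) :
    ∃ ε, equivRealStructures (TorusT n₀ n₁ n₂) μ (muEps n₀ n₁ n₂ ε) := by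
  obtain ⟨ε, d, hd⟩ :=
    exists_muEps_one_eq_inv_torusGamma_mul_mul hμ.map_apply_one_mul_apply_one
  have hμ_eq : μ = fun x => torusGamma n₀ n₁ n₂ x * μ 1 := funext hμ.apply_eq_map_mul_apply_one
  refine ⟨ε, ?_⟩
  rw [hμ_eq, muEps_eq_torusGamma_mul, equivRealStructures_map_mul_iff]
  exact ⟨d, hd⟩

end Torus

/-- **Example 2.2 (homogeneous toric case).** Let `T` be the torus
`(ℂˣ)^{n₀} × (ℂˣ)^{n₁} × (ℂˣ × ℂˣ)^{n₂}` acting on itself by multiplication, with the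
real group structure `σ = σ₀^{×n₀} × σ₁^{×n₁} × σ₂^{×n₂}`. Then every `μ_ε` is a
`σ`-equivariant real structure on `T`; `μ_ε ∼ μ_{ε'}` only if `ε = ε'`; every
`σ`-equivariant real structure on `T` is equivalent to some `μ_ε`; and there are
exactly `2^{n₁}` equivalence classes of `σ`-equivariant real structures on `T`. -/
theorem torus_realStructures_classification (n₀ n₁ n₂ : ℕ) :
    (∀ ε : Fin n₁ → ℤˣ,
      IsRealStructureOn (torusGamma n₀ n₁ n₂) (muEps n₀ n₁ n₂ ε)) ∧
    (∀ ε ε' : Fin n₁ → ℤˣ,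
      equivRealStructures (TorusT n₀ n₁ n₂) (muEps n₀ n₁ n₂ ε) (muEps n₀ n₁ n₂ ε') →
        ε = ε') ∧
    (∀ μ : TorusT n₀ n₁ n₂ → TorusT n₀ n₁ n₂,
      IsRealStructureOn (torusGamma n₀ n₁ n₂) μ →
        ∃ ε : Fin n₁ → ℤˣ,
          equivRealStructures (TorusT n₀ n₁ n₂) μ (muEps n₀ n₁ n₂ ε)) ∧
    Nat.card (Quot (fun μ μ' : {μ : TorusT n₀ n₁ n₂ → TorusT n₀ n₁ n₂ //
        IsRealStructureOn (torusGamma n₀ n₁ n₂) μ} =>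
      equivRealStructures (TorusT n₀ n₁ n₂) μ.1 μ'.1)) = 2 ^ n₁ := by
  refine ⟨isRealStructureOn_muEps, fun _ _ => eq_of_equivRealStructures_muEps,
    fun _ => exists_equivRealStructures_muEps, ?_⟩
  refine (card_quot_eq_of_representatives
    ((equivRealStructures_equivalence _ _).comap Subtype.val)
    (fun ε => ⟨muEps n₀ n₁ n₂ ε, isRealStructureOn_muEps ε⟩)
    (fun _ _ => eq_of_equivRealStructures_muEps)
    (fun μ => exists_equivRealStructures_muEps μ.2)).trans ?_
  simp
end

section
/- Let G be a group, H a subgroup of G, and σ_qs : G → G a group automorphism with σ_qs ∘ σ_qs = id, σ_qs(H) = H (hence σ_qs(N_G(H)) = N_G(H)). Assume N_G(H)/H is abelian, i.e. a·b·a⁻¹·b⁻¹ ∈ H for all a, b ∈ N_G(H). Let c ∈ G with c·σ_qs(c) ∈ Z(G), set σ = inn_c ∘ σ_qs, and let n ∈ N_G(H) satisfy c·σ_qs(c)·σ_qs(n)·n ∈ H. Then the map μ₀ : G/H → G/H, kH ↦ σ(k)·c·n·H is well defined, and for every a ∈ N_G(H) the G-equivariant bijection φ_a : G/H → G/H, kH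 ↦ k·a·H satisfies μ₀ ∘ φ_a ∘ μ₀ = φ_{σ_qs(a)}. -/
/-!
With `z = c * σqs c` central and `σqs` involutive, `μ₀ (φ_a (μ₀ (kH))) = k * z * σqs n * σqs a * n * H`.
Modulo `H` the elements `σqs a` and `σqs n` of the normalizer commute, so this coset is
`k * σqs a * (z * σqs n * n) * H = k * σqs a * H`.
-/

open Subgroup MulOpposite

namespace QuotientGroup

variable {G G' : Type*} [Group G] [Group G'] {H : Subgroup G} {K : Subgroup G'}

def cosetMap (f : G →* G') (h : H ≤ K.comap f) : G ⧸ H → G' ⧸ K :=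
  Quotient.map' f fun a b hab => by
    rw [leftRel_apply] at hab ⊢
    simpa using h hab

@[simp]
theorem cosetMap_mk (f : G →* G') (h : H ≤ K.comap f) (g : G) :
    cosetMap f h (g : G ⧸ H) = f g :=
  rfl

end QuotientGroup

open QuotientGroup

section

variable {G : Type*} [Group G] {H : Subgroup G}

theorem Subgroup.comap_eq_self_of_involutive {σ : G →* G} (hσ : Function.Involutive σ)
    (hH : H.map σ = H) : H.comap σ = H :=
  calc H.comap σ = (H.map σ).comap σ := by rw [hH]
    _ = H := comap_map_eq_self_of_injective hσ.injective H

theorem Subgroup.map_mem_normalizer_of_map_eq {σ : G →* G} (hH : H.map σ = H) {g : G}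
    (hg : g ∈ normalizer (H : Set G)) : σ g ∈ normalizer (H : Set G) := by
  simpa [hH] using le_normalizer_map σ (mem_map_of_mem σ hg)

theorem inv_mul_mul_mem_of_mem_center {z p q n : G} (hz : z ∈ center G)
    (hpq : q⁻¹ * p * q * p⁻¹ ∈ H) (hzpn : z * p * n ∈ H) : q⁻¹ * z * p * q * n ∈ H := by
  have hz := mem_center_iff.mp hz
  have : q⁻¹ * z * p * q * n = (q⁻¹ * p * q * p⁻¹) * (z * p * n) :=
    calc q⁻¹ * z * p * q * n = z * (q⁻¹ * p * q) * n := by rw [hz q⁻¹]; group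
      _ = q⁻¹ * p * q * p⁻¹ * (p * z * n) := by rw [← hz]; group
      _ = _ := by rw [hz p]
  exact this ▸ mul_mem hpq hzpn

theorem mul_map_mul_map_mul {σ : G →* G} (hσ : Function.Involutive σ) {c : G}
    (hc : c * σ c ∈ center G) (k x : G) : c * σ (c * σ k * x) = k * (c * σ c * σ x) := by
  rw [map_mul, map_mul, hσ, ← mul_assoc, ← mul_assoc, ← mul_assoc, mem_center_iff.mp hc k]

end

/-- **Key computation in the proof of Proposition 3.17.**
Let `σ_qs` be an involutive automorphism of `G` with `σ_qs(H) = H`, suppose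
`N_G(H)/H` is abelian, let `c ∈ G` with `c·σ_qs(c) ∈ Z(G)`, set
`σ = inn_c ∘ σ_qs`, and let `n ∈ N_G(H)` satisfy `c·σ_qs(c)·σ_qs(n)·n ∈ H`. Then the
map `μ₀ : kH ↦ σ(k)·c·n·H` is well defined on `G/H`, and for every `a ∈ N_G(H)` the
`G`-equivariant bijection `φ_a : kH ↦ k·a·H` satisfies `μ₀ ∘ φ_a ∘ μ₀ = φ_{σ_qs(a)}`. -/
theorem mu0_conj_translation {G : Type*} [Group G] (H : Subgroup G)
    (σqs : G →* G) (hσ : ∀ g, σqs (σqs g) = g) (hH : H.map σqs = H)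
    (hab : ∀ a ∈ Subgroup.normalizer (H : Set G), ∀ b ∈ Subgroup.normalizer (H : Set G), a * b * a⁻¹ * b⁻¹ ∈ H)
    (c : G) (hc : c * σqs c ∈ Subgroup.center G)
    (n : G) (hn : n ∈ Subgroup.normalizer (H : Set G)) (hcn : c * σqs c * σqs n * n ∈ H) :
    ∃ μ₀ : G ⧸ H → G ⧸ H,
      (∀ k : G,
        μ₀ (k : G ⧸ H) = ((((MulAut.conj c).toMonoidHom.comp σqs) k * c * n : G) : G ⧸ H)) ∧
      ∀ a ∈ Subgroup.normalizer (H : Set G), ∃ φa φb : G ⧸ H → G ⧸ H,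
        (∀ k : G, φa (k : G ⧸ H) = ((k * a : G) : G ⧸ H)) ∧
        (∀ k : G, φb (k : G ⧸ H) = ((k * σqs a : G) : G ⧸ H)) ∧
        μ₀ ∘ φa ∘ μ₀ = φb := by
  let rightMul (a : G) (ha : a ∈ normalizer (H : Set G)) : G ⧸ H → G ⧸ H :=
    ((⟨op a, ha⟩ : (normalizer (H : Set G)).op) • ·)
  let μ₀ : G ⧸ H → G ⧸ H := fun x =>
    c • rightMul n hn (cosetMap σqs (comap_eq_self_of_involutive hσ hH).ge x)
  refine ⟨μ₀, fun k => ?_, fun a ha => ?_⟩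
  · show ((c * (σqs k * n) : G) : G ⧸ H) = _
    simp [MulAut.conj, mul_assoc]
  have hσa := map_mem_normalizer_of_map_eq hH ha
  refine ⟨rightMul a ha, rightMul (σqs a) hσa, fun _ => rfl, fun _ => rfl, ?_⟩
  funext x
  induction x using QuotientGroup.induction_on with | H k => ?_
  show ((c * (σqs (c * (σqs k * n) * a) * n) : G) : G ⧸ H) = ((k * σqs a : G) : G ⧸ H)
  rw [← mul_assoc, ← mul_assoc, mul_assoc _ n, mul_map_mul_map_mul hσ hc, mul_assoc k]
  change k • ((_ : G) : G ⧸ H) = k • ((σqs a : G) : G ⧸ H)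
  refine congrArg (k • ·) (QuotientGroup.eq.mpr ?_).symm
  have hcomm := hab _ (inv_mem hσa) _ (map_mem_normalizer_of_map_eq hH hn)
  rw [inv_inv] at hcomm
  rw [map_mul]
  simpa only [mul_assoc] using inv_mul_mul_mem_of_mem_center hc hcomm hcn
end

section
/- Let G be a group, H a subgroup of G, and σ_qs : G → G a group automorphism with σ_qs ∘ σ_qs = id and σ_qs(H) = H. Assume N_G(H)/H is abelian, i.e. a·b·a⁻¹·b⁻¹ ∈ H for all a, b ∈ N_G(H). Let c ∈ G with c·σ_qs(c) ∈ Z(G), set σ = inn_c ∘ σ_qs, and assume there exists n ∈ N_G(H) with c·σ_qs(c)·σ_qs(n)·n ∈ H (equivalently, a σ-equivariant real structure on G/H exists). Then there is a bijection between: (a) the set of σ-equivariant real structures on G/H modulo equivalence (μ ∼ μ' iff μ' = ψ ∘ μ ∘ ψ⁻¹ for some G-equivariant bijection ψ of G/H), and (b) the cohomology group H¹(Γ, N_G(H)/H) = {aH ∈ N_G(H)/H | σ_qs(a)·a ∈ H} / {b⁻¹·σ_qs(b)·H | b ∈ N_G(H)} for the action of Γ on N_G(H)/H induced by σ_qs.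 -/
/-- Equivalence of `σ`-equivariant real structures on `G/H`: `μ ∼ μ'` iff
`μ' = ψ ∘ μ ∘ ψ⁻¹` for some `G`-equivariant bijection `ψ` of `G/H`. -/
def realStructureRel {G : Type*} [Group G] (σ : G →* G) (H : Subgroup G)
    (μ μ' : {μ : G ⧸ H → G ⧸ H // IsEquivRealStructure σ H μ}) : Prop :=
  ∃ ψ : Equiv.Perm (G ⧸ H), (∀ (g : G) (x : G ⧸ H), ψ (g • x) = g • ψ x) ∧
    ∀ x : G ⧸ H, μ'.1 x = ψ (μ.1 (ψ.symm x))

/-- Representatives of `H¹(Γ, N_G(H)/H)`: elements `a ∈ N_G(H)` whose class `aH` is a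
1-cocycle, i.e. `σ_qs(a)·a ∈ H`. -/
def H1Reps {G : Type*} [Group G] (σqs : G →* G) (H : Subgroup G) :=
  {a : G // a ∈ Subgroup.normalizer (H : Set G) ∧ σqs a * a ∈ H}

/-- `a ∼ a'` iff `a'H = a·(b⁻¹·σ_qs(b))·H` for some `b ∈ N_G(H)`, i.e. the classes of
`a` and `a'` in `N_G(H)/H` differ by a coboundary `b⁻¹·σ_qs(b)·H`. -/
def H1Rel {G : Type*} [Group G] (σqs : G →* G) (H : Subgroup G)
    (a a' : H1Reps σqs H) : Prop :=
  ∃ b ∈ Subgroup.normalizer (H : Set G), (σqs b)⁻¹ * b * (a.1)⁻¹ * a'.1 ∈ H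

/-!
A `σ`-equivariant map `μ` of `G/H` is determined by its basepoint `μ(H) = mH` through
`μ(gH) = σ(g)·mH`; it is well defined and injective exactly when `m⁻¹σ(H)m = H`, i.e.
`c⁻¹m ∈ N_G(H)`, and, as `σ` is an involution, it is involutive exactly when `σ(m)·m ∈ H`.
Writing `m = c·a·n₀` with `n₀` the given solution, `σ(m)·m ≡ (c·σ_qs(c)·σ_qs(n₀)·n₀)·(σ_qs(a)·a)`
modulo `H` because `N_G(H)/H` is abelian, so involutivity becomes the cocycle condition on `a`.
The `G`-equivariant bijections of `G/H` are the right multiplications by `n ∈ N_G(H)`, and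
conjugating `μ` by one replaces `m` by `σ(n)⁻¹·m·n`, i.e. `a` by `a·σ_qs(n)⁻¹·n`: a coboundary.
-/

open Subgroup

noncomputable def Quot.equivOfRelIff {α β : Type*} {r : α → α → Prop} {s : β → β → Prop}
    (hs : Equivalence s) (f : α → β) (hf : ∀ a a', r a a' ↔ s (f a) (f a'))
    (hsurj : ∀ b, ∃ a, s (f a) b) : Quot r ≃ Quot s :=
  (Quot.congrRight fun a a' =>
      (hf a a').trans ⟨Quot.sound, fun h => hs.eqvGen_iff.1 (Quot.eqvGen_exact h)⟩).trans
    (Setoid.quotientKerEquivOfSurjective (Quot.mk s ∘ f) <| by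
      rintro ⟨b⟩
      exact (hsurj b).imp fun _ => Quot.sound)

section EquivariantMaps

variable {G : Type*} [Group G] {H : Subgroup G} {σ : G →* G} {μ : G ⧸ H → G ⧸ H}

theorem apply_mk_of_equivariant (hμ : ∀ (g : G) (x : G ⧸ H), μ (g • x) = σ g • μ x) {m : G}
    (hm : μ (1 : G) = m) (g : G) : μ g = ↑(σ g * m) := by
  simpa [MulAction.Quotient.smul_mk, hm] using hμ g (1 : G)

theorem conj_mem_iff_of_equivariant_of_injective
    (hμ : ∀ (g : G) (x : G ⧸ H), μ (g • x) = σ g • μ x) (hinj : Function.Injective μ) {m : G}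
    (hm : μ (1 : G) = m) (k : G) : m⁻¹ * σ k * m ∈ H ↔ k ∈ H := by
  calc m⁻¹ * σ k * m ∈ H ↔ (m : G ⧸ H) = ↑(σ k * m) := by rw [QuotientGroup.eq, mul_assoc]
    _ ↔ μ (1 : G) = μ k := by rw [hm, apply_mk_of_equivariant hμ hm k]
    _ ↔ k ∈ H := by rw [hinj.eq_iff, QuotientGroup.eq, inv_one, one_mul]

theorem involutive_iff_of_equivariant (hσ : ∀ g, σ (σ g) = g)
    (hμ : ∀ (g : G) (x : G ⧸ H), μ (g • x) = σ g • μ x) {m : G} (hm : μ (1 : G) = m) :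
    (∀ x, μ (μ x) = x) ↔ σ m * m ∈ H := by
  have hμμ (g : G) : μ (μ g) = ↑(g * (σ m * m)) := by
    rw [apply_mk_of_equivariant hμ hm, apply_mk_of_equivariant hμ hm, map_mul, hσ, mul_assoc]
  refine ⟨fun h => ?_, fun h x => ?_⟩
  · simpa [hμμ, QuotientGroup.eq] using (h (1 : G)).symm
  · induction x using QuotientGroup.induction_on with
    | H g => rw [hμμ, QuotientGroup.mk_mul_of_mem g h]

def ofBasepoint (σ : G →* G) (m : G) (hm : ∀ k ∈ H, m⁻¹ * σ k * m ∈ H) : G ⧸ H → G ⧸ H :=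
  Quotient.map' (fun g => σ g * m) fun g g' hgg' => by
    rw [QuotientGroup.leftRel_apply] at hgg' ⊢
    simpa [mul_assoc] using hm _ hgg'

theorem ofBasepoint_mk {m : G} (hm : ∀ k ∈ H, m⁻¹ * σ k * m ∈ H) (g : G) :
    ofBasepoint σ m hm g = ↑(σ g * m) := rfl

theorem ofBasepoint_smul {m : G} (hm : ∀ k ∈ H, m⁻¹ * σ k * m ∈ H) (g : G) (x : G ⧸ H) :
    ofBasepoint σ m hm (g • x) = σ g • ofBasepoint σ m hm x := by
  induction x using QuotientGroup.induction_on with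
  | H u => simp [ofBasepoint_mk, MulAction.Quotient.smul_mk, mul_assoc]

theorem mem_normalizer_of_equivariant_of_injective {ψ : G ⧸ H → G ⧸ H}
    (hψ : ∀ (g : G) (x : G ⧸ H), ψ (g • x) = g • ψ x) (hinj : Function.Injective ψ) {n : G}
    (hn : ψ (1 : G) = n) : n ∈ normalizer H :=
  mem_normalizer_iff''.2 fun k =>
    (conj_mem_iff_of_equivariant_of_injective (σ := MonoidHom.id G) hψ hinj hn k).symm

def rightMulPerm (n : G) (hn : n ∈ normalizer H) : Equiv.Perm (G ⧸ H) where
  toFun := ofBasepoint (MonoidHom.id G) n fun k => (mem_normalizer_iff''.1 hn k).1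
  invFun := ofBasepoint (MonoidHom.id G) n⁻¹ fun k => (mem_normalizer_iff''.1 (inv_mem hn) k).1
  left_inv x := by
    induction x using QuotientGroup.induction_on with
    | H g => simp [ofBasepoint_mk]
  right_inv x := by
    induction x using QuotientGroup.induction_on with
    | H g => simp [ofBasepoint_mk]

theorem rightMulPerm_mk {n : G} (hn : n ∈ normalizer H) (g : G) :
    rightMulPerm n hn g = ↑(g * n) := rfl

theorem rightMulPerm_symm_mk {n : G} (hn : n ∈ normalizer H) (g : G) :
    (rightMulPerm n hn).symm g = ↑(g * n⁻¹) := rfl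

theorem rightMulPerm_smul {n : G} (hn : n ∈ normalizer H) (g : G) (x : G ⧸ H) :
    rightMulPerm n hn (g • x) = g • rightMulPerm n hn x :=
  ofBasepoint_smul (fun k => (mem_normalizer_iff''.1 hn k).1) g x

end EquivariantMaps

section RealStructures

variable {G : Type*} [Group G] {H : Subgroup G} {σ : G →* G}

theorem realStructureRel_iff (μ μ' : {μ : G ⧸ H → G ⧸ H // IsEquivRealStructure σ H μ})
    {m m' : G} (hm : μ.1 (1 : G) = m) (hm' : μ'.1 (1 : G) = m') :
    realStructureRel σ H μ μ' ↔ ∃ n ∈ normalizer H, m'⁻¹ * σ n⁻¹ * m * n ∈ H := by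
  constructor
  · rintro ⟨ψ, hψ, hψμ⟩
    obtain ⟨n, hn⟩ : ∃ n : G, ψ (1 : G) = n := ⟨_, (QuotientGroup.out_eq' _).symm⟩
    have hψ_mk := apply_mk_of_equivariant (σ := MonoidHom.id G) hψ hn
    have hψ_symm : ψ.symm (1 : G) = ↑n⁻¹ := ψ.symm_apply_eq.2 (by simp [hψ_mk])
    refine ⟨n, mem_normalizer_of_equivariant_of_injective hψ ψ.injective hn, ?_⟩
    have h1 := hψμ (1 : G)
    rw [hm', hψ_symm, apply_mk_of_equivariant μ.2.2 hm, hψ_mk, QuotientGroup.eq] at h1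
    simpa [mul_assoc] using h1
  · rintro ⟨n, hn, h⟩
    refine ⟨rightMulPerm n hn, rightMulPerm_smul hn, fun x => ?_⟩
    induction x using QuotientGroup.induction_on with
    | H g =>
      rw [rightMulPerm_symm_mk, apply_mk_of_equivariant μ.2.2 hm, rightMulPerm_mk,
        apply_mk_of_equivariant μ'.2.2 hm', QuotientGroup.eq]
      simpa [mul_assoc] using h

theorem realStructureRel_refl (μ : {μ : G ⧸ H → G ⧸ H // IsEquivRealStructure σ H μ}) :
    realStructureRel σ H μ μ :=
  ⟨Equiv.refl _, fun _ _ => rfl, fun _ => rfl⟩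

end RealStructures

section Involution

variable {G : Type*} [Group G] {H : Subgroup G} {σqs : G →* G}

theorem map_mem_of_map_eq (hH : H.map σqs = H) {k : G} (hk : k ∈ H) : σqs k ∈ H :=
  hH ▸ mem_map_of_mem σqs hk

theorem map_mem_iff_of_involutive (hσ : ∀ g, σqs (σqs g) = g) (hH : H.map σqs = H) {k : G} :
    σqs k ∈ H ↔ k ∈ H :=
  ⟨fun hk => hσ k ▸ map_mem_of_map_eq hH hk, map_mem_of_map_eq hH⟩

theorem map_mem_normalizer_of_involutive (hσ : ∀ g, σqs (σqs g) = g) (hH : H.map σqs = H)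
    {g : G} (hg : g ∈ normalizer H) : σqs g ∈ normalizer H := by
  rw [mem_normalizer_iff''] at hg ⊢
  intro h
  calc h ∈ H ↔ g⁻¹ * σqs h * g ∈ H := (map_mem_iff_of_involutive hσ hH).symm.trans (hg _)
    _ ↔ σqs (g⁻¹ * σqs h * g) ∈ H := (map_mem_iff_of_involutive hσ hH).symm
    _ ↔ (σqs g)⁻¹ * h * σqs g ∈ H := by simp [hσ]

end Involution

section NormalizerQuotient

variable {G : Type*} [Group G] (H : Subgroup G)

abbrev NormalizerQuotient : Type _ := normalizer (H : Set G) ⧸ H.subgroupOf (normalizer H)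

variable {H}

theorem NormalizerQuotient.mk_eq_one_iff (x : normalizer (H : Set G)) :
    (x : NormalizerQuotient H) = 1 ↔ (x : G) ∈ H :=
  QuotientGroup.eq_one_iff x

theorem NormalizerQuotient.mem_iff_of_mk_eq {x y : normalizer (H : Set G)}
    (h : (x : NormalizerQuotient H) = y) : (x : G) ∈ H ↔ (y : G) ∈ H := by
  rw [← mk_eq_one_iff, ← mk_eq_one_iff, h]

abbrev NormalizerQuotient.commGroup
    (hab : ∀ a ∈ normalizer (H : Set G), ∀ b ∈ normalizer (H : Set G), a * b * a⁻¹ * b⁻¹ ∈ H) :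
    CommGroup (NormalizerQuotient H) where
  mul_comm := by
    rintro ⟨x⟩ ⟨y⟩
    refine QuotientGroup.eq.2 ?_
    rw [mem_subgroupOf]
    simpa [mul_assoc] using hab _ (inv_mem y.2) _ (inv_mem x.2)

end NormalizerQuotient

section H1

variable {G : Type*} [Group G] {H : Subgroup G} {σqs : G →* G}

theorem equivalence_H1Rel (hσ : ∀ g, σqs (σqs g) = g) (hH : H.map σqs = H)
    (hab : ∀ a ∈ normalizer (H : Set G), ∀ b ∈ normalizer (H : Set G), a * b * a⁻¹ * b⁻¹ ∈ H) :
    Equivalence (H1Rel σqs H) where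
  refl a := ⟨1, one_mem _, by simp⟩
  symm := by
    rintro ⟨a, ha, _⟩ ⟨a', ha', _⟩ ⟨b, hb, h⟩
    have hsb := map_mem_normalizer_of_involutive hσ hH hb
    refine ⟨σqs b, hsb, ?_⟩
    rw [hσ]
    let A : normalizer (H : Set G) := ⟨a, ha⟩
    let A' : normalizer (H : Set G) := ⟨a', ha'⟩
    let B : normalizer (H : Set G) := ⟨b, hb⟩
    let SB : normalizer (H : Set G) := ⟨σqs b, hsb⟩
    refine (NormalizerQuotient.mem_iff_of_mk_eq (x := (SB⁻¹ * B * A⁻¹ * A')⁻¹)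
      (y := B⁻¹ * SB * A'⁻¹ * A) ?_).1 (inv_mem h)
    let := NormalizerQuotient.commGroup hab
    apply Additive.ofMul.injective
    simp only [QuotientGroup.mk_mul, QuotientGroup.mk_inv, ofMul_mul, ofMul_inv]
    abel
  trans := by
    rintro ⟨a, ha, _⟩ ⟨a', ha', _⟩ ⟨a'', ha'', _⟩ ⟨b, hb, h⟩ ⟨b', hb', h'⟩
    have hsb := map_mem_normalizer_of_involutive hσ hH hb
    have hsb' := map_mem_normalizer_of_involutive hσ hH hb'
    refine ⟨b * b', mul_mem hb hb', ?_⟩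
    rw [map_mul]
    let A : normalizer (H : Set G) := ⟨a, ha⟩
    let A' : normalizer (H : Set G) := ⟨a', ha'⟩
    let A'' : normalizer (H : Set G) := ⟨a'', ha''⟩
    let B : normalizer (H : Set G) := ⟨b, hb⟩
    let B' : normalizer (H : Set G) := ⟨b', hb'⟩
    let SB : normalizer (H : Set G) := ⟨σqs b, hsb⟩
    let SB' : normalizer (H : Set G) := ⟨σqs b', hsb'⟩
    refine (NormalizerQuotient.mem_iff_of_mk_eq
      (x := (SB⁻¹ * B * A⁻¹ * A') * (SB'⁻¹ * B' * A'⁻¹ * A''))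
      (y := (SB * SB')⁻¹ * (B * B') * A⁻¹ * A'') ?_).1 (mul_mem h h')
    let := NormalizerQuotient.commGroup hab
    apply Additive.ofMul.injective
    simp only [QuotientGroup.mk_mul, QuotientGroup.mk_inv, ofMul_mul, ofMul_inv]
    abel

end H1

section Twisted

variable {G : Type*} [Group G] {H : Subgroup G} {σqs : G →* G} {c : G}

theorem conj_comp_apply_apply (hσ : ∀ g, σqs (σqs g) = g) (hc : c * σqs c ∈ center G) (g : G) :
    (MulAut.conj c).toMonoidHom.comp σqs ((MulAut.conj c).toMonoidHom.comp σqs g) = g := by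
  calc _ = (c * σqs c) * g * (c * σqs c)⁻¹ := by simp [hσ]; group
    _ = g := by rw [← mem_center_iff.1 hc g]; group

theorem inv_mul_mem_normalizer_of_isEquivRealStructure (hσ : ∀ g, σqs (σqs g) = g)
    (hH : H.map σqs = H) {μ : G ⧸ H → G ⧸ H}
    (hμ : IsEquivRealStructure ((MulAut.conj c).toMonoidHom.comp σqs) H μ) {m : G}
    (hm : μ (1 : G) = m) : c⁻¹ * m ∈ normalizer H := by
  refine mem_normalizer_iff''.2 fun h => ?_
  calc h ∈ H ↔ σqs h ∈ H := (map_mem_iff_of_involutive hσ hH).symm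
    _ ↔ m⁻¹ * (MulAut.conj c).toMonoidHom.comp σqs (σqs h) * m ∈ H :=
      (conj_mem_iff_of_equivariant_of_injective hμ.2 (Function.Involutive.injective hμ.1) hm _).symm
    _ ↔ (c⁻¹ * m)⁻¹ * h * (c⁻¹ * m) ∈ H := by simp [hσ, mul_assoc]

theorem twisted_conj_mem_of_mem_normalizer (hH : H.map σqs = H) {p : G} (hp : p ∈ normalizer H) :
    ∀ k ∈ H, (c * p)⁻¹ * (MulAut.conj c).toMonoidHom.comp σqs k * (c * p) ∈ H := by
  intro k hk
  simpa [mul_assoc] using (mem_normalizer_iff''.1 hp _).1 (map_mem_of_map_eq hH hk)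

end Twisted

section Correspondence

variable {G : Type*} [Group G] {H : Subgroup G} {σqs : G →* G} {c n₀ : G}

theorem twisted_mul_self_mem_iff (hσ : ∀ g, σqs (σqs g) = g) (hH : H.map σqs = H)
    (hab : ∀ a ∈ normalizer (H : Set G), ∀ b ∈ normalizer (H : Set G), a * b * a⁻¹ * b⁻¹ ∈ H)
    (hc : c * σqs c ∈ center G) (hn₀ : n₀ ∈ normalizer H)
    (hz : c * σqs c * σqs n₀ * n₀ ∈ H) {a : G} (ha : a ∈ normalizer H) :
    (MulAut.conj c).toMonoidHom.comp σqs (c * (a * n₀)) * (c * (a * n₀)) ∈ H ↔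
      σqs a * a ∈ H := by
  have e : (MulAut.conj c).toMonoidHom.comp σqs (c * (a * n₀)) * (c * (a * n₀)) =
      c * σqs c * σqs a * σqs n₀ * a * n₀ := by simp; group
  rw [e]
  let Z : normalizer (H : Set G) := ⟨c * σqs c, center_le_normalizer _ hc⟩
  let A : normalizer (H : Set G) := ⟨a, ha⟩
  let N₀ : normalizer (H : Set G) := ⟨n₀, hn₀⟩
  let SA : normalizer (H : Set G) := ⟨σqs a, map_mem_normalizer_of_involutive hσ hH ha⟩
  let SN₀ : normalizer (H : Set G) := ⟨σqs n₀, map_mem_normalizer_of_involutive hσ hH hn₀⟩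
  refine NormalizerQuotient.mem_iff_of_mk_eq (x := Z * SA * SN₀ * A * N₀) (y := SA * A) ?_
  have hz' := (NormalizerQuotient.mk_eq_one_iff (Z * SN₀ * N₀)).2 hz
  let := NormalizerQuotient.commGroup hab
  calc ((Z * SA * SN₀ * A * N₀ : normalizer (H : Set G)) : NormalizerQuotient H)
      = ↑(Z * SN₀ * N₀) * ↑(SA * A) := by
        apply Additive.ofMul.injective
        simp only [QuotientGroup.mk_mul, ofMul_mul]
        abel
    _ = ↑(SA * A) := by rw [hz', one_mul]

theorem twisted_conj_mul_mem_iff (hσ : ∀ g, σqs (σqs g) = g) (hH : H.map σqs = H)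
    (hab : ∀ a ∈ normalizer (H : Set G), ∀ b ∈ normalizer (H : Set G), a * b * a⁻¹ * b⁻¹ ∈ H)
    (hn₀ : n₀ ∈ normalizer H) {a a' n : G} (ha : a ∈ normalizer H) (ha' : a' ∈ normalizer H)
    (hn : n ∈ normalizer H) :
    (c * (a' * n₀))⁻¹ * (MulAut.conj c).toMonoidHom.comp σqs n⁻¹ * (c * (a * n₀)) * n ∈ H ↔
      n⁻¹ * σqs n * a⁻¹ * a' ∈ H := by
  have e : (c * (a' * n₀))⁻¹ * (MulAut.conj c).toMonoidHom.comp σqs n⁻¹ * (c * (a * n₀)) * n =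
      n₀⁻¹ * a'⁻¹ * (σqs n)⁻¹ * a * n₀ * n := by simp; group
  rw [e, ← inv_mem_iff (x := n⁻¹ * σqs n * a⁻¹ * a')]
  let A : normalizer (H : Set G) := ⟨a, ha⟩
  let A' : normalizer (H : Set G) := ⟨a', ha'⟩
  let N₀ : normalizer (H : Set G) := ⟨n₀, hn₀⟩
  let Nn : normalizer (H : Set G) := ⟨n, hn⟩
  let SN : normalizer (H : Set G) := ⟨σqs n, map_mem_normalizer_of_involutive hσ hH hn⟩
  refine NormalizerQuotient.mem_iff_of_mk_eq (x := N₀⁻¹ * A'⁻¹ * SN⁻¹ * A * N₀ * Nn)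
    (y := (Nn⁻¹ * SN * A⁻¹ * A')⁻¹) ?_
  let := NormalizerQuotient.commGroup hab
  apply Additive.ofMul.injective
  simp only [QuotientGroup.mk_mul, QuotientGroup.mk_inv, ofMul_mul, ofMul_inv]
  abel

theorem exists_H1Reps_of_isEquivRealStructure (hσ : ∀ g, σqs (σqs g) = g) (hH : H.map σqs = H)
    (hab : ∀ a ∈ normalizer (H : Set G), ∀ b ∈ normalizer (H : Set G), a * b * a⁻¹ * b⁻¹ ∈ H)
    (hc : c * σqs c ∈ center G) (hn₀ : n₀ ∈ normalizer H) (hz : c * σqs c * σqs n₀ * n₀ ∈ H)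
    {μ : G ⧸ H → G ⧸ H} (hμ : IsEquivRealStructure ((MulAut.conj c).toMonoidHom.comp σqs) H μ) :
    ∃ a : H1Reps σqs H, μ (1 : G) = ↑(c * (a.1 * n₀)) := by
  obtain ⟨m, hm⟩ : ∃ m : G, μ (1 : G) = m := ⟨_, (QuotientGroup.out_eq' _).symm⟩
  have hm' : μ (1 : G) = ↑(c * (c⁻¹ * m * n₀⁻¹ * n₀)) := by rw [hm]; group
  have ha : c⁻¹ * m * n₀⁻¹ ∈ normalizer H :=
    mul_mem (inv_mul_mem_normalizer_of_isEquivRealStructure hσ hH hμ hm) (inv_mem hn₀)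
  have hcocycle := (involutive_iff_of_equivariant (conj_comp_apply_apply hσ hc) hμ.2 hm').1 hμ.1
  exact ⟨⟨_, ha, (twisted_mul_self_mem_iff hσ hH hab hc hn₀ hz ha).1 hcocycle⟩, hm'⟩

theorem exists_isEquivRealStructure_of_H1Reps (hσ : ∀ g, σqs (σqs g) = g) (hH : H.map σqs = H)
    (hab : ∀ a ∈ normalizer (H : Set G), ∀ b ∈ normalizer (H : Set G), a * b * a⁻¹ * b⁻¹ ∈ H)
    (hc : c * σqs c ∈ center G) (hn₀ : n₀ ∈ normalizer H) (hz : c * σqs c * σqs n₀ * n₀ ∈ H)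
    (a : H1Reps σqs H) :
    ∃ μ : G ⧸ H → G ⧸ H, IsEquivRealStructure ((MulAut.conj c).toMonoidHom.comp σqs) H μ ∧
      μ (1 : G) = ↑(c * (a.1 * n₀)) := by
  have hm := twisted_conj_mem_of_mem_normalizer (c := c) hH (mul_mem a.2.1 hn₀)
  have hμ1 : ofBasepoint _ _ hm (1 : G) = ↑(c * (a.1 * n₀)) := by simp [ofBasepoint_mk]
  have hcocycle := (twisted_mul_self_mem_iff hσ hH hab hc hn₀ hz a.2.1).2 a.2.2
  refine ⟨ofBasepoint _ _ hm, ⟨?_, ofBasepoint_smul hm⟩, hμ1⟩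
  exact (involutive_iff_of_equivariant (conj_comp_apply_apply hσ hc) (ofBasepoint_smul hm) hμ1).2
    hcocycle

theorem realStructureRel_iff_H1Rel (hσ : ∀ g, σqs (σqs g) = g) (hH : H.map σqs = H)
    (hab : ∀ a ∈ normalizer (H : Set G), ∀ b ∈ normalizer (H : Set G), a * b * a⁻¹ * b⁻¹ ∈ H)
    (hn₀ : n₀ ∈ normalizer H)
    (μ μ' : {μ : G ⧸ H → G ⧸ H // IsEquivRealStructure ((MulAut.conj c).toMonoidHom.comp σqs) H μ})
    {a a' : H1Reps σqs H} (hm : μ.1 (1 : G) = ↑(c * (a.1 * n₀)))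
    (hm' : μ'.1 (1 : G) = ↑(c * (a'.1 * n₀))) :
    realStructureRel ((MulAut.conj c).toMonoidHom.comp σqs) H μ μ' ↔ H1Rel σqs H a a' := by
  rw [realStructureRel_iff μ μ' hm hm']
  constructor
  · rintro ⟨n, hn, h⟩
    refine ⟨σqs n, map_mem_normalizer_of_involutive hσ hH hn, ?_⟩
    rw [hσ]
    exact (twisted_conj_mul_mem_iff hσ hH hab hn₀ a.2.1 a'.2.1 hn).1 h
  · rintro ⟨b, hb, h⟩
    have hsb := map_mem_normalizer_of_involutive hσ hH hb
    refine ⟨σqs b, hsb, ?_⟩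
    rw [twisted_conj_mul_mem_iff hσ hH hab hn₀ a.2.1 a'.2.1 hsb, hσ]
    exact h

end Correspondence

/-- **Proposition 3.17 (abstract core).** Let `σ_qs` be an involutive automorphism of
`G` with `σ_qs(H) = H`, suppose `N_G(H)/H` is abelian, let `c ∈ G` with
`c·σ_qs(c) ∈ Z(G)`, set `σ = inn_c ∘ σ_qs`, and assume a `σ`-equivariant real
structure on `G/H` exists (equivalently, `c·σ_qs(c)·σ_qs(n)·n ∈ H` for some
`n ∈ N_G(H)`). Then the set of `σ`-equivariant real structures on `G/H` modulo
equivalence is in bijection with `H¹(Γ, N_G(H)/H)` for the `Γ`-action induced by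
`σ_qs`. -/
theorem equivRealStructures_biject_H1_of_normalizerQuotient {G : Type*} [Group G]
    (H : Subgroup G) (σqs : G →* G) (hσ : ∀ g, σqs (σqs g) = g) (hH : H.map σqs = H)
    (hab : ∀ a ∈ Subgroup.normalizer (H : Set G), ∀ b ∈ Subgroup.normalizer (H : Set G), a * b * a⁻¹ * b⁻¹ ∈ H)
    (c : G) (hc : c * σqs c ∈ Subgroup.center G)
    (hex : ∃ n ∈ Subgroup.normalizer (H : Set G), c * σqs c * σqs n * n ∈ H) :
    Nonempty
      (Quot (realStructureRel ((MulAut.conj c).toMonoidHom.comp σqs) H) ≃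
        Quot (H1Rel σqs H)) := by
  obtain ⟨n₀, hn₀, hz⟩ := hex
  choose a ha using fun μ : {μ // IsEquivRealStructure _ H μ} =>
    exists_H1Reps_of_isEquivRealStructure hσ hH hab hc hn₀ hz μ.2
  refine ⟨Quot.equivOfRelIff (equivalence_H1Rel hσ hH hab) a
    (fun μ μ' => realStructureRel_iff_H1Rel hσ hH hab hn₀ μ μ' (ha μ) (ha μ')) fun b => ?_⟩
  obtain ⟨μ, hμ, hμ1⟩ := exists_isEquivRealStructure_of_H1Reps hσ hH hab hc hn₀ hz b
  exact ⟨⟨μ, hμ⟩, (realStructureRel_iff_H1Rel hσ hH hab hn₀ _ _ (ha _) hμ1).1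
    (realStructureRel_refl _)⟩
end
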